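/- arXiv:1212.6761 — 9 statements merged into one kernel-verified Lean document; each statement's English description precedes it below -/
import Mathlib

section
/- Let K be a compact Hausdorff space and let ν ∈ M(K) be a compensation of μ ∈ M(K). Then ‖μ − ν‖ ≤ 2‖μ⁻‖ and ‖ν‖ ≤ ‖μ‖. -/
open MeasureTheory

noncomputable section

variable {K : Type*} [TopologicalSpace K] [MeasurableSpace K]

/-- The integral of a function against a signed measure. -/
def sInt (μ : SignedMeasure K) (f : K → ℝ) : ℝ :=
  ∫ x, f x ∂μ.toJordanDecomposition.posPart - ∫ x, f x ∂μ.toJordanDecomposition.negPart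

/-- The total variation norm of a signed measure. -/
def mNorm (μ : SignedMeasure K) : ℝ := (μ.totalVariation Set.univ).toReal

/-- `ν` is a compensation of `μ`: if `μ(K) > 0` then `0 ≤ ν ≤ μ⁺` and `ν(K) = μ(K)`;
if `μ(K) ≤ 0` then `ν = 0`. -/
def IsCompensation (μ ν : SignedMeasure K) : Prop :=
  if 0 < μ Set.univ then
    0 ≤ ν ∧ ν ≤ μ.toJordanDecomposition.posPart.toSignedMeasure ∧ ν Set.univ = μ Set.univ
  else ν = 0

/-- A family of signed measures indexed by a topological space is weak*-continuous. -/
def WStarContinuousFamily {T : Type*} [TopologicalSpace T] (F : T → SignedMeasure K) : Prop :=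
  ∀ g : C(K, ℝ), Continuous fun t => sInt (F t) g

/-- Membership in `W(K)`: a weak*-continuous map from `K` into the closed unit ball of the
space `M(K)` of regular Borel signed measures. -/
def MemW (F : K → SignedMeasure K) : Prop :=
  WStarContinuousFamily F ∧ ∀ t, (F t).totalVariation.Regular ∧ mNorm (F t) ≤ 1

/-- `K` admits local compensation: every element of `W(K)` admits a compensation in `W(K)`. -/
def AdmitsLocalCompensation (K : Type*) [TopologicalSpace K] [MeasurableSpace K] : Prop :=
  ∀ F : K → SignedMeasure K, MemW F →
    ∃ G : K → SignedMeasure K, MemW G ∧ ∀ t, IsCompensation (F t) (G t)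

/-- The weak* topology on signed measures. -/
instance wstarTopology : TopologicalSpace (SignedMeasure K) :=
  TopologicalSpace.induced (fun μ (g : C(K, ℝ)) => sInt μ g) inferInstance

/-- `M(K)`: the regular Borel signed measures on `K`, with the weak* topology. -/
def MK (K : Type*) [TopologicalSpace K] [MeasurableSpace K] : Type _ :=
  {μ : SignedMeasure K // μ.totalVariation.Regular}

instance : TopologicalSpace (MK K) := instTopologicalSpaceSubtype

/-- The closed unit ball `B_{M(K)}` of `M(K)`, with the weak* topology. -/
def BMK (K : Type*) [TopologicalSpace K] [MeasurableSpace K] : Type _ :=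
  {μ : SignedMeasure K // μ.totalVariation.Regular ∧ mNorm μ ≤ 1}

instance : TopologicalSpace (BMK K) := instTopologicalSpaceSubtype

/-- A compensation function on `K`: a weak*-to-weak*-continuous map `ξ : M(K) → M(K)` such
that `ξ μ` is a compensation of `μ` for every `μ ∈ M(K)`. -/
def IsCompensationFunction (ξ : MK K → MK K) : Prop :=
  Continuous ξ ∧ ∀ μ : MK K, IsCompensation μ.1 (ξ μ).1

/-- A `B_{M(K)}`-compensation function on `K`. -/
def IsBallCompensationFunction (ξ : BMK K → MK K) : Prop :=
  Continuous ξ ∧ ∀ μ : BMK K, IsCompensation μ.1 (ξ μ).1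

/-- The numerical radius of an operator on a real Banach space. -/
def NumericalRadius {X : Type*} [NormedAddCommGroup X] [NormedSpace ℝ X] (T : X →L[ℝ] X) : ℝ :=
  sSup {r | ∃ (x : X) (φ : X →L[ℝ] ℝ), ‖x‖ = 1 ∧ ‖φ‖ = 1 ∧ φ x = 1 ∧ r = |φ (T x)|}

/-- The Bishop-Phelps-Bollobás property for numerical radius, witnessed by a
given function `δ`. -/
def HasBPBNumericalRadiusWith (X : Type*) [NormedAddCommGroup X] [NormedSpace ℝ X]
    (δ : ℝ → ℝ) : Prop :=
  ∀ ε : ℝ, 0 < ε → ε < 1 →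
    ∀ T : X →L[ℝ] X, NumericalRadius T = 1 →
      ∀ (x : X) (φ : X →L[ℝ] ℝ), ‖x‖ = 1 → ‖φ‖ = 1 → φ x = 1 →
        1 - δ ε ≤ φ (T x) →
        ∃ (T₀ : X →L[ℝ] X) (x₀ : X) (φ₀ : X →L[ℝ] ℝ),
          NumericalRadius T₀ = 1 ∧ ‖x₀‖ = 1 ∧ ‖φ₀‖ = 1 ∧ φ₀ x₀ = 1 ∧
          φ₀ (T₀ x₀) = 1 ∧ NumericalRadius (T - T₀) ≤ ε ∧ ‖x - x₀‖ ≤ ε ∧ ‖φ - φ₀‖ ≤ ε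

/-- The Bishop-Phelps-Bollobás property for numerical radius. -/
def HasBPBNumericalRadius (X : Type*) [NormedAddCommGroup X] [NormedSpace ℝ X] : Prop :=
  ∃ δ : ℝ → ℝ, (∀ ε : ℝ, 0 < ε → ε < 1 → 0 < δ ε ∧ δ ε < 1) ∧ HasBPBNumericalRadiusWith X δ

/-- A closeness function for `K`: a continuous function `c` on
`{(x,y,z) ∈ K³ : y ≠ z}` with values in `[-1,1]` such that `c(x,y,z) = -c(x,z,y)`
whenever `y ≠ z` and `c(x,x,z) = 1` whenever `x ≠ z`. -/
def IsClosenessFunction (K : Type*) [TopologicalSpace K]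
    (c : {p : K × K × K // p.2.1 ≠ p.2.2} → ℝ) : Prop :=
  Continuous c ∧ (∀ p, c p ∈ Set.Icc (-1 : ℝ) 1) ∧
    (∀ (x y z : K) (h : y ≠ z), c ⟨(x, y, z), h⟩ = -c ⟨(x, z, y), h.symm⟩) ∧
    (∀ (x z : K) (h : x ≠ z), c ⟨(x, x, z), h⟩ = 1)

section

variable {X : Type*} [MeasurableSpace X]

lemma mNorm_nonneg (s : SignedMeasure X) : 0 ≤ mNorm s := ENNReal.toReal_nonneg

lemma mNorm_zero : mNorm (0 : SignedMeasure X) = 0 := by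
  simp [mNorm, SignedMeasure.totalVariation_zero]

lemma mNorm_eq_posPart_add_negPart (s : SignedMeasure X) :
    mNorm s = s.toJordanDecomposition.posPart.real Set.univ +
      s.toJordanDecomposition.negPart.real Set.univ :=
  measureReal_add_apply

lemma apply_univ_le_mNorm (s : SignedMeasure X) : s Set.univ ≤ mNorm s :=
  (le_abs_self _).trans (s.norm_le_totalVariation Set.univ)

lemma mNorm_sub_le (s t : SignedMeasure X) : mNorm (s - t) ≤ mNorm s + mNorm t := by
  have hsub := VectorMeasure.variation_sub_le (μ := s) (ν := t)
  simp only [← SignedMeasure.totalVariation_eq_variation] at hsub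
  rw [mNorm, mNorm, mNorm, ← ENNReal.toReal_add (measure_ne_top _ _) (measure_ne_top _ _)]
  exact ENNReal.toReal_mono (by finiteness) (hsub Set.univ)

lemma mNorm_toSignedMeasure (m : Measure X) [IsFiniteMeasure m] :
    mNorm m.toSignedMeasure = m.real Set.univ := by
  rw [mNorm, SignedMeasure.totalVariation_eq_variation, Measure.variation_toSignedMeasure]
  rfl

lemma mNorm_of_nonneg {s : SignedMeasure X} (hs : 0 ≤ s) : mNorm s = s Set.univ := by
  have hs' : 0 ≤[Set.univ] s := (VectorMeasure.le_restrict_univ_iff_le _ _).2 hs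
  have hm := s.toMeasureOfZeroLE_toSignedMeasure hs'
  calc mNorm s = mNorm (s.toMeasureOfZeroLE Set.univ MeasurableSet.univ hs').toSignedMeasure := by
        rw [hm]
    _ = s (Set.univ ∩ Set.univ) := by
        rw [mNorm_toSignedMeasure, s.toMeasureOfZeroLE_real_apply hs' _ MeasurableSet.univ]
    _ = s Set.univ := by rw [Set.inter_self]

/-- Writing `s - t = (s⁺ - t) - s⁻`, the first summand is a nonnegative measure of mass
`s⁺(X) - s(X) = s⁻(X)`. -/
lemma mNorm_sub_le_two_mul_negPart {s t : SignedMeasure X}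
    (hle : t ≤ s.toJordanDecomposition.posPart.toSignedMeasure) (huniv : t Set.univ = s Set.univ) :
    mNorm (s - t) ≤ 2 * s.toJordanDecomposition.negPart.real Set.univ := by
  set P := s.toJordanDecomposition.posPart
  set N := s.toJordanDecomposition.negPart
  have hdecomp : s - t = (P.toSignedMeasure - t) - N.toSignedMeasure := by
    conv_lhs => rw [← s.toSignedMeasure_toJordanDecomposition]
    rw [JordanDecomposition.toSignedMeasure]
    abel
  have hmass : mNorm (P.toSignedMeasure - t) = N.real Set.univ := by
    rw [mNorm_of_nonneg (sub_nonneg.2 hle), sub_apply, huniv,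
      s.apply_eq_posPart_real_sub_negPart_real MeasurableSet.univ,
      Measure.toSignedMeasure_apply_measurable MeasurableSet.univ]
    ring
  calc mNorm (s - t) ≤ mNorm (P.toSignedMeasure - t) + mNorm N.toSignedMeasure :=
        hdecomp ▸ mNorm_sub_le _ _
    _ = 2 * N.real Set.univ := by rw [hmass, mNorm_toSignedMeasure]; ring

lemma mNorm_le_two_mul_negPart_of_apply_univ_nonpos {s : SignedMeasure X}
    (hs : s Set.univ ≤ 0) : mNorm s ≤ 2 * s.toJordanDecomposition.negPart.real Set.univ := by
  rw [s.apply_eq_posPart_real_sub_negPart_real MeasurableSet.univ] at hs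
  rw [mNorm_eq_posPart_add_negPart]
  linarith

end

theorem stmt1_general (K : Type*)
    [MeasurableSpace K]
    (μ ν : SignedMeasure K)
    (h : IsCompensation μ ν) :
    mNorm (μ - ν) ≤ 2 * (μ.toJordanDecomposition.negPart Set.univ).toReal ∧
      mNorm ν ≤ mNorm μ := by
  rw [IsCompensation] at h
  split_ifs at h with hμ
  · obtain ⟨hν_nonneg, hν_le, hν_univ⟩ := h
    exact ⟨mNorm_sub_le_two_mul_negPart hν_le hν_univ,
      mNorm_of_nonneg hν_nonneg ▸ hν_univ ▸ apply_univ_le_mNorm μ⟩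
  · subst h
    rw [sub_zero, mNorm_zero]
    exact ⟨mNorm_le_two_mul_negPart_of_apply_univ_nonpos (not_lt.1 hμ), mNorm_nonneg μ⟩

/-- If `ν ∈ M(K)` is a compensation of `μ ∈ M(K)`, then
`‖μ - ν‖ ≤ 2‖μ⁻‖` and `‖ν‖ ≤ ‖μ‖`. -/
theorem stmt1 (K : Type*) [TopologicalSpace K] [CompactSpace K] [T2Space K]
    [MeasurableSpace K] [BorelSpace K]
    (μ ν : SignedMeasure K)
    (hμreg : μ.totalVariation.Regular) (hνreg : ν.totalVariation.Regular)
    (h : IsCompensation μ ν) :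
    mNorm (μ - ν) ≤ 2 * (μ.toJordanDecomposition.negPart Set.univ).toReal ∧
      mNorm ν ≤ mNorm μ :=
  stmt1_general K μ ν h

end
end

section
/- Let K be a compact Hausdorff space, f ∈ B_{C(K)}, μ ∈ B_{M(K)}, and 0 < σ < ε < 1. Let u, v ∈ B_{C(K)} be non-negative functions with u ≡ 1 on {f ≥ 1−σ}, u ≡ 0 on {f ≤ 1−ε}, v ≡ 1 on {f ≤ −1+σ}, v ≡ 0 on {f ≥ −1+ε}, and define μ₁, μ₂ ∈ M(K) by μ₁(g) = ∫_K g·u dμ and μ₂(g) = ∫_K g·v dμ for g ∈ C(K). Then: (1) ‖μ₁‖ ≤ 1 and ‖μ₂‖ ≤ 1; (2) ‖μ₁⁺‖ + ‖μ₂⁻‖ ≥ 1 − (1 − μ(f))/σ; (3) ‖μ₁⁻‖ + ‖μ₂⁺‖ ≤ (1 − μ(f))/σ; (4) ‖μ − μ₁ − μ₂‖ ≤ (1 − μ(f))/σ. -/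
open MeasureTheory

noncomputable section

variable {K : Type*} [TopologicalSpace K] [MeasurableSpace K]

/-! The Jordan parts μ⁺, μ⁻ of μ are mutually singular, hence so are w·μ⁺ and w·μ⁻ for a
continuous density `w ≥ 0`; by uniqueness they form the Jordan decomposition of `w·μ`, so
`‖(w·μ)⁺‖ = ∫ w dμ⁺` and `‖(w·μ)⁻‖ = ∫ w dμ⁻`. Applied to `w = u`, `v` and `1 - u - v` (which is
nonnegative because `u` and `v` have disjoint supports), each estimate comes from integrating a
pointwise inequality between `σ u`, `σ v`, `σ (1 - u - v)` and `1 ± f` (e.g. `σ u ≤ 1 + f`,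
`σ - 1 + f ≤ σ u`) against μ⁺ and μ⁻ and using `‖μ⁺‖ + ‖μ⁻‖ ≤ 1`. -/

section MeasurableSpace

variable {X : Type*} [MeasurableSpace X]

theorem MeasureTheory.measureReal_withDensity_ofReal {m : Measure X} {w : X → ℝ} (hw0 : 0 ≤ w)
    (hw : Integrable w m) {s : Set X} (hs : MeasurableSet s) :
    (m.withDensity fun x => ENNReal.ofReal (w x)).real s = ∫ x in s, w x ∂m := by
  rw [measureReal_def, withDensity_apply _ hs,
    integral_eq_lintegral_of_nonneg_ae (.of_forall hw0) hw.aestronglyMeasurable.restrict]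

theorem MeasureTheory.SignedMeasure.toJordanDecomposition_eq_withDensity
    {μ ν : SignedMeasure X} {w : X → ℝ} (hw0 : 0 ≤ w)
    (hwp : Integrable w μ.toJordanDecomposition.posPart)
    (hwn : Integrable w μ.toJordanDecomposition.negPart)
    (h : ∀ s, MeasurableSet s → ν s = ∫ x in s, w x ∂μ.toJordanDecomposition.posPart -
      ∫ x in s, w x ∂μ.toJordanDecomposition.negPart) :
    ν.toJordanDecomposition.posPart =
        μ.toJordanDecomposition.posPart.withDensity (fun x => ENNReal.ofReal (w x)) ∧
      ν.toJordanDecomposition.negPart =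
        μ.toJordanDecomposition.negPart.withDensity (fun x => ENNReal.ofReal (w x)) := by
  have := isFiniteMeasure_withDensity_ofReal hwp.2
  have := isFiniteMeasure_withDensity_ofReal hwn.2
  let j : JordanDecomposition X :=
    { posPart := μ.toJordanDecomposition.posPart.withDensity fun x => ENNReal.ofReal (w x)
      negPart := μ.toJordanDecomposition.negPart.withDensity fun x => ENNReal.ofReal (w x)
      mutuallySingular := μ.toJordanDecomposition.mutuallySingular.mono_ac
        (withDensity_absolutelyContinuous _ _) (withDensity_absolutelyContinuous _ _) }
  have hν : ν = j.toSignedMeasure := by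
    ext s hs
    rw [h s hs, JordanDecomposition.toSignedMeasure, sub_apply,
      Measure.toSignedMeasure_apply_measurable hs, Measure.toSignedMeasure_apply_measurable hs,
      measureReal_withDensity_ofReal hw0 hwp hs, measureReal_withDensity_ofReal hw0 hwn hs]
  rw [SignedMeasure.toJordanDecomposition_eq hν]
  exact ⟨rfl, rfl⟩

theorem mNorm_eq_posPart_add_negPart_s3 (ν : SignedMeasure X) :
    mNorm ν = (ν.toJordanDecomposition.posPart Set.univ).toReal +
      (ν.toJordanDecomposition.negPart Set.univ).toReal := by
  rw [mNorm, SignedMeasure.totalVariation, Measure.add_apply,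
    ENNReal.toReal_add (measure_ne_top _ _) (measure_ne_top _ _)]

theorem sInt_indicator (μ : SignedMeasure X) (w : X → ℝ) {s : Set X} (hs : MeasurableSet s) :
    sInt μ (s.indicator w) = ∫ x in s, w x ∂μ.toJordanDecomposition.posPart -
      ∫ x in s, w x ∂μ.toJordanDecomposition.negPart := by
  simp only [sInt, integral_indicator hs]

theorem apply_eq_sInt_indicator_one (μ : SignedMeasure X) {s : Set X} (hs : MeasurableSet s) :
    μ s = sInt μ (s.indicator 1) := by
  conv_lhs => rw [← μ.toSignedMeasure_toJordanDecomposition]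
  rw [sInt_indicator μ _ hs, JordanDecomposition.toSignedMeasure, sub_apply,
    Measure.toSignedMeasure_apply_measurable hs, Measure.toSignedMeasure_apply_measurable hs]
  simp

end MeasurableSpace

section CompactSpace

variable [CompactSpace K] [BorelSpace K]

theorem ContinuousMap.integrable (w : C(K, ℝ)) (m : Measure K) [IsFiniteMeasure m] :
    Integrable w m :=
  w.continuous.integrable_of_hasCompactSupport (HasCompactSupport.of_compactSpace _)

theorem sInt_indicator_sub (μ : SignedMeasure K) (w₁ w₂ : C(K, ℝ)) {s : Set K}
    (hs : MeasurableSet s) :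
    sInt μ (s.indicator ⇑(w₁ - w₂)) = sInt μ (s.indicator w₁) - sInt μ (s.indicator w₂) := by
  simp only [sInt_indicator μ _ hs, ContinuousMap.sub_apply]
  rw [integral_sub (w₁.integrable _).restrict (w₂.integrable _).restrict,
    integral_sub (w₁.integrable _).restrict (w₂.integrable _).restrict]
  ring

theorem toReal_posPart_negPart_univ_of_apply_eq_sInt {μ ν : SignedMeasure K} {w : C(K, ℝ)}
    (hw0 : 0 ≤ w) (h : ∀ s, MeasurableSet s → ν s = sInt μ (s.indicator w)) :
    (ν.toJordanDecomposition.posPart Set.univ).toReal =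
        ∫ x, w x ∂μ.toJordanDecomposition.posPart ∧
      (ν.toJordanDecomposition.negPart Set.univ).toReal =
        ∫ x, w x ∂μ.toJordanDecomposition.negPart := by
  obtain ⟨hp, hn⟩ := SignedMeasure.toJordanDecomposition_eq_withDensity (μ := μ) (ν := ν)
    (fun x => hw0 x) (w.integrable _) (w.integrable _)
    fun s hs => (h s hs).trans (sInt_indicator μ w hs)
  rw [hp, hn, ← measureReal_def, ← measureReal_def,
    measureReal_withDensity_ofReal (fun x => hw0 x) (w.integrable _) MeasurableSet.univ,
    measureReal_withDensity_ofReal (fun x => hw0 x) (w.integrable _) MeasurableSet.univ,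
    setIntegral_univ, setIntegral_univ]
  exact ⟨rfl, rfl⟩

theorem mul_integral_posPart_add_integral_negPart_le {μ : SignedMeasure K} (hμ : mNorm μ ≤ 1)
    {a c : ℝ} (hc : 0 ≤ c) {f g h : C(K, ℝ)} (hg : ∀ x, a * g x ≤ c - f x)
    (hh : ∀ x, a * h x ≤ c + f x) :
    a * (∫ x, g x ∂μ.toJordanDecomposition.posPart +
      ∫ x, h x ∂μ.toJordanDecomposition.negPart) ≤ c - sInt μ f := by
  set p := μ.toJordanDecomposition.posPart
  set q := μ.toJordanDecomposition.negPart
  have hp : a * ∫ x, g x ∂p ≤ c * p.real Set.univ - ∫ x, f x ∂p := by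
    rw [← integral_const_mul]
    calc ∫ x, a * g x ∂p ≤ ∫ x, (c - f x) ∂p :=
          integral_mono ((g.integrable p).const_mul a)
            ((integrable_const c).sub (f.integrable p)) hg
      _ = _ := by rw [integral_sub (integrable_const c) (f.integrable p), integral_const,
          smul_eq_mul, mul_comm]
  have hq : a * ∫ x, h x ∂q ≤ c * q.real Set.univ + ∫ x, f x ∂q := by
    rw [← integral_const_mul]
    calc ∫ x, a * h x ∂q ≤ ∫ x, (c + f x) ∂q :=
          integral_mono ((h.integrable q).const_mul a)
            ((integrable_const c).add (f.integrable q)) hh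
      _ = _ := by rw [integral_add (integrable_const c) (f.integrable q), integral_const,
          smul_eq_mul, mul_comm]
  have hpq : c * (p.real Set.univ + q.real Set.univ) ≤ c := by
    rw [mNorm_eq_posPart_add_negPart_s3] at hμ
    exact mul_le_of_le_one_right hc hμ
  simp only [sInt]
  linarith

theorem mNorm_le_one_of_apply_eq_sInt {μ ν : SignedMeasure K} (hμ : mNorm μ ≤ 1) {w : C(K, ℝ)}
    (hw0 : 0 ≤ w) (hw1 : ∀ x, w x ≤ 1)
    (h : ∀ s, MeasurableSet s → ν s = sInt μ (s.indicator w)) : mNorm ν ≤ 1 := by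
  obtain ⟨hp, hn⟩ := toReal_posPart_negPart_univ_of_apply_eq_sInt hw0 h
  rw [mNorm_eq_posPart_add_negPart_s3, hp, hn]
  simpa [sInt] using mul_integral_posPart_add_integral_negPart_le hμ zero_le_one
    (a := 1) (f := 0) (g := w) (h := w) (by simpa using hw1) (by simpa using hw1)

end CompactSpace

section Cutoff

variable {σ ε t a b : ℝ}

theorem sub_one_add_le_mul_of_cutoff (hσ : 0 ≤ σ) (ht : t ≤ 1) (ha : 0 ≤ a)
    (hA : 1 - σ ≤ t → a = 1) : σ - 1 + t ≤ σ * a := by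
  rcases le_or_gt (1 - σ) t with h | h
  · rw [hA h]; linarith
  · nlinarith

theorem mul_le_one_add_of_cutoff (hσ : 0 ≤ σ) (hσ1 : σ ≤ 1) (hε : ε ≤ 1) (ht : -1 ≤ t)
    (ha : a ≤ 1) (hB : t ≤ 1 - ε → a = 0) : σ * a ≤ 1 + t := by
  rcases le_or_gt t (1 - ε) with h | h
  · rw [hB h]; linarith
  · nlinarith

theorem one_sub_sub_nonneg_of_cutoff (hε : ε ≤ 1) (ha : a ≤ 1) (hb : b ≤ 1)
    (haB : t ≤ 1 - ε → a = 0) (hbB : -1 + ε ≤ t → b = 0) : 0 ≤ 1 - a - b := by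
  rcases le_or_gt t (1 - ε) with h | h
  · rw [haB h]; linarith
  · rw [hbB (by linarith)]; linarith

theorem mul_one_sub_sub_le_of_cutoff (hσ : 0 ≤ σ) (ht : t ≤ 1) (ha : 0 ≤ a) (hb : 0 ≤ b)
    (hA : 1 - σ ≤ t → a = 1) : σ * (1 - a - b) ≤ 1 - t := by
  rcases le_or_gt (1 - σ) t with h | h
  · rw [hA h]; nlinarith
  · nlinarith

end Cutoff

theorem stmt3_general (K : Type*) [TopologicalSpace K] [CompactSpace K]
    [MeasurableSpace K] [BorelSpace K]
    (f u v : C(K, ℝ)) (μ μ₁ μ₂ : SignedMeasure K)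
    (σ ε : ℝ) (hσ : 0 < σ) (hσε : σ < ε) (hε : ε < 1)
    (hf : ‖f‖ ≤ 1) (hμ : mNorm μ ≤ 1)
    (hu0 : 0 ≤ u) (hu1 : ‖u‖ ≤ 1) (hv0 : 0 ≤ v) (hv1 : ‖v‖ ≤ 1)
    (huA : ∀ x, 1 - σ ≤ f x → u x = 1) (huB : ∀ x, f x ≤ 1 - ε → u x = 0)
    (hvA : ∀ x, f x ≤ -1 + σ → v x = 1) (hvB : ∀ x, -1 + ε ≤ f x → v x = 0)
    (hμ₁ : ∀ s : Set K, MeasurableSet s → μ₁ s = sInt μ (s.indicator u))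
    (hμ₂ : ∀ s : Set K, MeasurableSet s → μ₂ s = sInt μ (s.indicator v)) :
    mNorm μ₁ ≤ 1 ∧ mNorm μ₂ ≤ 1 ∧
    1 - (1 - sInt μ f) / σ ≤
      (μ₁.toJordanDecomposition.posPart Set.univ).toReal +
        (μ₂.toJordanDecomposition.negPart Set.univ).toReal ∧
    (μ₁.toJordanDecomposition.negPart Set.univ).toReal +
        (μ₂.toJordanDecomposition.posPart Set.univ).toReal ≤ (1 - sInt μ f) / σ ∧
    mNorm (μ - μ₁ - μ₂) ≤ (1 - sInt μ f) / σ := by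
  have hσ1 : σ ≤ 1 := (hσε.trans hε).le
  replace hf : ∀ x, -1 ≤ f x ∧ f x ≤ 1 := fun x => abs_le.1 ((f.norm_le zero_le_one).1 hf x)
  replace hu1 : ∀ x, u x ≤ 1 := fun x => (abs_le.1 ((u.norm_le zero_le_one).1 hu1 x)).2
  replace hv1 : ∀ x, v x ≤ 1 := fun x => (abs_le.1 ((v.norm_le zero_le_one).1 hv1 x)).2
  have hw0 : 0 ≤ 1 - u - v := fun x =>
    one_sub_sub_nonneg_of_cutoff hε.le (hu1 x) (hv1 x) (huB x) (hvB x)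
  have hμ₃ : ∀ s, MeasurableSet s → (μ - μ₁ - μ₂) s = sInt μ (s.indicator ⇑(1 - u - v)) :=
    fun s hs => by
      rw [sInt_indicator_sub μ _ _ hs, sInt_indicator_sub μ _ _ hs, sub_apply, sub_apply,
        hμ₁ s hs, hμ₂ s hs, apply_eq_sInt_indicator_one μ hs, ContinuousMap.coe_one]
  obtain ⟨h₁p, h₁n⟩ := toReal_posPart_negPart_univ_of_apply_eq_sInt hu0 hμ₁
  obtain ⟨h₂p, h₂n⟩ := toReal_posPart_negPart_univ_of_apply_eq_sInt hv0 hμ₂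
  obtain ⟨h₃p, h₃n⟩ := toReal_posPart_negPart_univ_of_apply_eq_sInt hw0 hμ₃
  refine ⟨mNorm_le_one_of_apply_eq_sInt hμ hu0 hu1 hμ₁,
    mNorm_le_one_of_apply_eq_sInt hμ hv0 hv1 hμ₂, ?_, ?_, ?_⟩
  · have := mul_integral_posPart_add_integral_negPart_le hμ (sub_nonneg.2 hσ1) (a := -σ)
      (f := f) (g := u) (h := v)
      (fun x => by
        linarith [sub_one_add_le_mul_of_cutoff (a := u x) hσ.le (hf x).2 (hu0 x) (huA x)])
      (fun x => by
        linarith [sub_one_add_le_mul_of_cutoff (t := -f x) (a := v x) hσ.le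
          (by linarith [hf x]) (hv0 x) fun h => hvA x (by linarith)])
    rw [h₁p, h₂n, sub_le_comm, le_div_iff₀ hσ]
    linarith
  · have := mul_integral_posPart_add_integral_negPart_le hμ zero_le_one (a := σ) (f := f)
      (fun x => mul_le_one_add_of_cutoff (t := -f x) hσ.le hσ1 hε.le (by linarith [hf x])
        (hv1 x) fun h => hvB x (by linarith))
      (fun x => mul_le_one_add_of_cutoff hσ.le hσ1 hε.le (hf x).1 (hu1 x) (huB x))
    rw [h₁n, h₂p, le_div_iff₀ hσ]
    linarith
  · have := mul_integral_posPart_add_integral_negPart_le hμ zero_le_one (a := σ) (f := f)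
      (g := 1 - u - v) (h := 1 - u - v)
      (fun x => mul_one_sub_sub_le_of_cutoff (a := u x) (b := v x) hσ.le (hf x).2
        (hu0 x) (hv0 x) (huA x))
      (fun x => by
        simpa [sub_sub, add_comm] using mul_one_sub_sub_le_of_cutoff (t := -f x) (a := v x)
          (b := u x) hσ.le (by linarith [hf x]) (hv0 x) (hu0 x) fun h => hvA x (by linarith))
    rw [mNorm_eq_posPart_add_negPart_s3, h₃p, h₃n, le_div_iff₀ hσ]
    linarith

/-- Properties of the measures `μ₁(g) = ∫ g·u dμ` and `μ₂(g) = ∫ g·v dμ`. -/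
theorem stmt3 (K : Type*) [TopologicalSpace K] [CompactSpace K] [T2Space K]
    [MeasurableSpace K] [BorelSpace K]
    (f u v : C(K, ℝ)) (μ μ₁ μ₂ : SignedMeasure K)
    (hμreg : μ.totalVariation.Regular)
    (σ ε : ℝ) (hσ : 0 < σ) (hσε : σ < ε) (hε : ε < 1)
    (hf : ‖f‖ ≤ 1) (hμ : mNorm μ ≤ 1)
    (hu0 : 0 ≤ u) (hu1 : ‖u‖ ≤ 1) (hv0 : 0 ≤ v) (hv1 : ‖v‖ ≤ 1)
    (huA : ∀ x, 1 - σ ≤ f x → u x = 1) (huB : ∀ x, f x ≤ 1 - ε → u x = 0)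
    (hvA : ∀ x, f x ≤ -1 + σ → v x = 1) (hvB : ∀ x, -1 + ε ≤ f x → v x = 0)
    (hμ₁ : ∀ s : Set K, MeasurableSet s → μ₁ s = sInt μ (s.indicator u))
    (hμ₂ : ∀ s : Set K, MeasurableSet s → μ₂ s = sInt μ (s.indicator v)) :
    mNorm μ₁ ≤ 1 ∧ mNorm μ₂ ≤ 1 ∧
    1 - (1 - sInt μ f) / σ ≤
      (μ₁.toJordanDecomposition.posPart Set.univ).toReal +
        (μ₂.toJordanDecomposition.negPart Set.univ).toReal ∧
    (μ₁.toJordanDecomposition.negPart Set.univ).toReal +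
        (μ₂.toJordanDecomposition.posPart Set.univ).toReal ≤ (1 - sInt μ f) / σ ∧
    mNorm (μ - μ₁ - μ₂) ≤ (1 - sInt μ f) / σ :=
  stmt3_general K f u v μ μ₁ μ₂ σ ε hσ hσε hε hf hμ hu0 hu1 hv0 hv1 huA huB hvA hvB hμ₁ hμ₂
end
end

section
/- Let K be a compact Hausdorff space admitting local compensation. Let (f, μ) ∈ B_{C(K)} × B_{M(K)} with μ(f) ≥ 1 − ε²/6 for some 0 < ε < 1. Then there exists (f₀, μ₀) ∈ Π(C(K)) such that ‖f − f₀‖ ≤ ε and ‖μ − μ₀‖ ≤ ε. -/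
open MeasureTheory

noncomputable section

variable {K : Type*} [TopologicalSpace K] [MeasurableSpace K]

/-!
Write `μ = μ⁺ - μ⁻`, `r = 1 - ε / 2`, `A = {f > r}` and `B = {f < -r}`, and split `μ = ν + ν'`
with `ν = μ⁺|A - μ⁻|B`. Since `|f| ≤ r` off `A ∪ B`, `1 - ε² / 6 ≤ μ(f) ≤ ‖ν‖ + r ‖ν'‖`, which
together with `‖ν‖ + ‖ν'‖ ≤ 1` gives `‖ν'‖ ≤ ε / 3` and `1 - ‖ν‖ ≤ ε² / 6 + ‖ν'‖`; in particular
`ν ≠ 0`. Take `μ₀ = ν / ‖ν‖` and `f₀ = f / r` truncated to `[-1, 1]`. As `f₀ = 1` on `A` and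
`f₀ = -1` on `B`, `μ₀(f₀) = 1`; moreover `‖f - f₀‖ ≤ ε / 2` and
`‖μ - μ₀‖ ≤ ‖ν'‖ + (1 - ‖ν‖) ≤ ε`.
-/

open Set
open scoped NNReal ENNReal

section SignedMeasure

variable {α : Type*} [MeasurableSpace α]

lemma mNorm_eq_posPart_add_negPart_s5 (μ : SignedMeasure α) :
    mNorm μ = μ.toJordanDecomposition.posPart.real univ
      + μ.toJordanDecomposition.negPart.real univ := by
  rw [mNorm, SignedMeasure.totalVariation, measureReal_def, measureReal_def, Measure.add_apply,
    ENNReal.toReal_add (measure_ne_top _ _) (measure_ne_top _ _)]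

lemma mNorm_nonneg_s5 (μ : SignedMeasure α) : 0 ≤ mNorm μ := ENNReal.toReal_nonneg

lemma mNorm_toSignedMeasure_s5 (j : JordanDecomposition α) :
    mNorm j.toSignedMeasure = j.posPart.real univ + j.negPart.real univ := by
  rw [mNorm_eq_posPart_add_negPart_s5, JordanDecomposition.toJordanDecomposition_toSignedMeasure]

lemma sInt_toSignedMeasure (j : JordanDecomposition α) (g : α → ℝ) :
    sInt j.toSignedMeasure g = ∫ x, g x ∂j.posPart - ∫ x, g x ∂j.negPart := by
  rw [sInt, JordanDecomposition.toJordanDecomposition_toSignedMeasure]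

lemma totalVariation_smul (c : ℝ≥0) (μ : SignedMeasure α) :
    (c • μ).totalVariation = c • μ.totalVariation := by
  rw [SignedMeasure.totalVariation, SignedMeasure.totalVariation,
    SignedMeasure.toJordanDecomposition_smul, JordanDecomposition.smul_posPart,
    JordanDecomposition.smul_negPart, smul_add]

lemma mNorm_smul (c : ℝ≥0) (μ : SignedMeasure α) : mNorm (c • μ) = c * mNorm μ := by
  rw [mNorm_eq_posPart_add_negPart_s5, mNorm_eq_posPart_add_negPart_s5,
    SignedMeasure.toJordanDecomposition_smul, JordanDecomposition.smul_posPart,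
    JordanDecomposition.smul_negPart, measureReal_nnreal_smul_apply,
    measureReal_nnreal_smul_apply, mul_add]

lemma sInt_smul (c : ℝ≥0) (μ : SignedMeasure α) (g : α → ℝ) :
    sInt (c • μ) g = c * sInt μ g := by
  rw [sInt, sInt, SignedMeasure.toJordanDecomposition_smul, JordanDecomposition.smul_posPart,
    JordanDecomposition.smul_negPart, integral_smul_nnreal_measure, integral_smul_nnreal_measure,
    NNReal.smul_def, NNReal.smul_def, smul_eq_mul, smul_eq_mul, mul_sub]

/-- The Jordan decomposition of `P - N` is `(P - N, N - P)`, whose mass is at most that of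
`(P, N)`. -/
lemma mNorm_le_of_eq_sub {P N : Measure α} [IsFiniteMeasure P] [IsFiniteMeasure N]
    {μ : SignedMeasure α} (h : μ = P.toSignedMeasure - N.toSignedMeasure) :
    mNorm μ ≤ P.real univ + N.real univ := by
  subst h
  rw [mNorm_eq_posPart_add_negPart_s5, Measure.toJordanDecomposition_toSignedMeasure_sub]
  exact add_le_add (ENNReal.toReal_mono (measure_ne_top _ _) (Measure.sub_le _))
    (ENNReal.toReal_mono (measure_ne_top _ _) (Measure.sub_le _))

lemma mNorm_sub_le_s5 (μ ν : SignedMeasure α) : mNorm (μ - ν) ≤ mNorm μ + mNorm ν := by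
  set jμ := μ.toJordanDecomposition
  set jν := ν.toJordanDecomposition
  have h : μ - ν = (jμ.posPart + jν.negPart).toSignedMeasure
      - (jμ.negPart + jν.posPart).toSignedMeasure := by
    rw [Measure.toSignedMeasure_add, Measure.toSignedMeasure_add]
    conv_lhs => rw [← μ.toSignedMeasure_toJordanDecomposition,
      ← ν.toSignedMeasure_toJordanDecomposition]
    simp only [JordanDecomposition.toSignedMeasure]
    abel
  refine (mNorm_le_of_eq_sub h).trans (le_of_eq ?_)
  rw [mNorm_eq_posPart_add_negPart_s5, mNorm_eq_posPart_add_negPart_s5, measureReal_add_apply,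
    measureReal_add_apply]
  ring

lemma integral_le_measureReal_add_mul_compl {ρ : Measure α} [IsFiniteMeasure ρ] {g : α → ℝ}
    (hg : Integrable g ρ) {U : Set α} (hU : MeasurableSet U) {c : ℝ}
    (h1 : ∀ x, g x ≤ 1) (h2 : ∀ x ∉ U, g x ≤ c) :
    ∫ x, g x ∂ρ ≤ ρ.real U + c * ρ.real Uᶜ := by
  rw [← integral_add_compl hU hg]
  gcongr
  · calc ∫ x in U, g x ∂ρ ≤ ∫ _ in U, (1 : ℝ) ∂ρ :=
          setIntegral_mono_on hg.integrableOn (integrable_const 1) hU fun x _ => h1 x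
      _ = ρ.real U := by simp
  · calc ∫ x in Uᶜ, g x ∂ρ ≤ ∫ _ in Uᶜ, c ∂ρ :=
          setIntegral_mono_on hg.integrableOn (integrable_const c) hU.compl fun x hx => h2 x hx
      _ = c * ρ.real Uᶜ := by simp [mul_comm]

lemma sInt_le_mNorm_mul (μ : SignedMeasure α) {g : α → ℝ} {C : ℝ}
    (hg : ∀ x, ‖g x‖ ≤ C) : sInt μ g ≤ mNorm μ * C := by
  have hp := norm_integral_le_of_norm_le_const (μ := μ.toJordanDecomposition.posPart)
    (ae_of_all _ hg)
  have hq := norm_integral_le_of_norm_le_const (μ := μ.toJordanDecomposition.negPart)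
    (ae_of_all _ hg)
  rw [Real.norm_eq_abs, abs_le] at hp hq
  rw [sInt, mNorm_eq_posPart_add_negPart_s5]
  linarith [hp.2, hq.1]

def normalized (ν : SignedMeasure α) : SignedMeasure α := (mNorm ν).toNNReal⁻¹ • ν

lemma coe_inv_toNNReal_mNorm (ν : SignedMeasure α) :
    (((mNorm ν).toNNReal⁻¹ : ℝ≥0) : ℝ) = (mNorm ν)⁻¹ := by
  rw [NNReal.coe_inv, Real.coe_toNNReal _ (mNorm_nonneg_s5 ν)]

lemma mNorm_normalized {ν : SignedMeasure α} (hν : mNorm ν ≠ 0) :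
    mNorm (normalized ν) = 1 := by
  rw [normalized, mNorm_smul, coe_inv_toNNReal_mNorm, inv_mul_cancel₀ hν]

lemma sInt_normalized (ν : SignedMeasure α) (g : α → ℝ) :
    sInt (normalized ν) g = sInt ν g / mNorm ν := by
  rw [normalized, sInt_smul, coe_inv_toNNReal_mNorm, inv_mul_eq_div]

lemma mNorm_add_sub_normalized_le {ν : SignedMeasure α} (ν' : SignedMeasure α)
    (h0 : 0 < mNorm ν) (h1 : mNorm ν ≤ 1) :
    mNorm (ν + ν' - normalized ν) ≤ mNorm ν' + (1 - mNorm ν) := by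
  set c := (mNorm ν).toNNReal⁻¹
  have hc : (c : ℝ) * mNorm ν = 1 := by rw [coe_inv_toNNReal_mNorm, inv_mul_cancel₀ h0.ne']
  have hc1 : 1 ≤ c := by
    rw [← NNReal.coe_le_coe, NNReal.coe_one, ← hc]
    exact mul_le_of_le_one_right (NNReal.coe_nonneg c) h1
  have hsub : ν + ν' - c • ν = ν' - (c - 1) • ν := by
    conv_lhs => rw [← tsub_add_cancel_of_le hc1, add_smul, one_smul]
    abel
  calc mNorm (ν + ν' - normalized ν) ≤ mNorm ν' + (c - 1 : ℝ≥0) * mNorm ν := by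
        rw [normalized, hsub, ← mNorm_smul]
        exact mNorm_sub_le_s5 _ _
    _ = mNorm ν' + (1 - mNorm ν) := by
        rw [NNReal.coe_sub hc1, sub_mul, hc, NNReal.coe_one, one_mul]

end SignedMeasure

namespace MeasureTheory.JordanDecomposition

variable {α : Type*} [MeasurableSpace α] (j : JordanDecomposition α)

def restrict (A B : Set α) : JordanDecomposition α where
  posPart := j.posPart.restrict A
  negPart := j.negPart.restrict B
  mutuallySingular := ((j.mutuallySingular.restrict A).symm.restrict B).symm

lemma toSignedMeasure_restrict_add_restrict_compl {A B : Set α} (hA : MeasurableSet A)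
    (hB : MeasurableSet B) :
    (j.restrict A B).toSignedMeasure + (j.restrict Aᶜ Bᶜ).toSignedMeasure
      = j.toSignedMeasure := by
  have split : ∀ (ρ : Measure α) [IsFiniteMeasure ρ] {s : Set α}, MeasurableSet s →
      ρ.toSignedMeasure
        = (ρ.restrict s).toSignedMeasure + (ρ.restrict sᶜ).toSignedMeasure := by
    intro ρ _ s hs
    rw [← Measure.toSignedMeasure_add]
    congr
    exact (Measure.restrict_add_restrict_compl hs).symm
  simp only [JordanDecomposition.toSignedMeasure, restrict]
  rw [split j.posPart hA, split j.negPart hB]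
  abel

lemma mNorm_restrict_add_mNorm_restrict_compl {A B : Set α} (hA : MeasurableSet A)
    (hB : MeasurableSet B) :
    mNorm (j.restrict A B).toSignedMeasure + mNorm (j.restrict Aᶜ Bᶜ).toSignedMeasure
      = mNorm j.toSignedMeasure := by
  simp only [mNorm_toSignedMeasure_s5, restrict, measureReal_restrict_apply_univ]
  rw [← measureReal_add_measureReal_compl hA, ← measureReal_add_measureReal_compl hB]
  ring

lemma exists_restrict_totalVariation_eq (A B : Set α) :
    ∃ E, (j.restrict A B).posPart + (j.restrict A B).negPart
      = (j.posPart + j.negPart).restrict E := by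
  obtain ⟨S, -, hpS, hqS⟩ := j.mutuallySingular
  set E := (A \ S) ∪ (B \ Sᶜ)
  refine ⟨E, ?_⟩
  rw [Measure.restrict_add]
  congr 1
  · have hE : A \ S = E \ S := by ext; simp [E]; tauto
    refine Measure.restrict_congr_set ((sdiff_null_ae_eq_self hpS).symm.trans ?_)
    rw [hE]
    exact sdiff_null_ae_eq_self hpS
  · have hE : B \ Sᶜ = E \ Sᶜ := by ext; simp [E]; tauto
    refine Measure.restrict_congr_set ((sdiff_null_ae_eq_self hqS).symm.trans ?_)
    rw [hE]
    exact sdiff_null_ae_eq_self hqS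

lemma sInt_restrict {A B : Set α} (hA : MeasurableSet A) (hB : MeasurableSet B) {g : α → ℝ}
    (hgA : ∀ x ∈ A, g x = 1) (hgB : ∀ x ∈ B, g x = -1) :
    sInt (j.restrict A B).toSignedMeasure g = mNorm (j.restrict A B).toSignedMeasure := by
  rw [sInt_toSignedMeasure, mNorm_toSignedMeasure_s5]
  simp only [restrict]
  rw [setIntegral_congr_fun hA hgA, setIntegral_congr_fun hB hgB]
  simp

lemma sInt_le_mNorm_restrict_add_mul {g : α → ℝ} (hgm : Measurable g) (hg : ∀ x, |g x| ≤ 1)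
    {A B : Set α} (hA : MeasurableSet A) (hB : MeasurableSet B) {r : ℝ}
    (hgA : ∀ x ∉ A, g x ≤ r) (hgB : ∀ x ∉ B, -r ≤ g x) :
    sInt j.toSignedMeasure g ≤ mNorm (j.restrict A B).toSignedMeasure
      + r * mNorm (j.restrict Aᶜ Bᶜ).toSignedMeasure := by
  have hint : ∀ (ρ : Measure α) [IsFiniteMeasure ρ], Integrable g ρ := fun ρ _ =>
    Integrable.of_bound hgm.aestronglyMeasurable 1 (ae_of_all _ hg)
  have hp := integral_le_measureReal_add_mul_compl (hint j.posPart) hA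
    (fun x => (abs_le.1 (hg x)).2) hgA
  have hq := integral_le_measureReal_add_mul_compl (hint j.negPart).neg hB
    (fun x => neg_le.1 (abs_le.1 (hg x)).1) (fun x hx => neg_le.1 (hgB x hx))
  simp only [Pi.neg_apply, integral_neg] at hq
  rw [sInt_toSignedMeasure, mNorm_toSignedMeasure_s5, mNorm_toSignedMeasure_s5]
  simp only [restrict, measureReal_restrict_apply_univ]
  linarith

lemma regular_totalVariation_restrict {X : Type*} [TopologicalSpace X] [R1Space X]
    [MeasurableSpace X] [BorelSpace X] (j : JordanDecomposition X)
    (hj : (j.posPart + j.negPart).Regular) (A B : Set X) :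
    (j.restrict A B).toSignedMeasure.totalVariation.Regular := by
  obtain ⟨E, hE⟩ := j.exists_restrict_totalVariation_eq A B
  rw [SignedMeasure.totalVariation, JordanDecomposition.toJordanDecomposition_toSignedMeasure, hE]
  exact Measure.Regular.restrict_of_measure_ne_top (measure_ne_top _ _)

end MeasureTheory.JordanDecomposition

lemma abs_sub_clamp_div_le {x r : ℝ} (hx : |x| ≤ 1) (hr : 0 < r) (hr1 : r ≤ 1) :
    |x - max (-1) (min 1 (x / r))| ≤ 1 - r := by
  obtain ⟨hx₁, hx₂⟩ := abs_le.1 hx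
  rcases le_total 1 (x / r) with h | h
  · have : r ≤ x := by rwa [le_div_iff₀ hr, one_mul] at h
    rw [min_eq_left h, max_eq_right (by norm_num), abs_le]
    constructor <;> linarith
  rcases le_total (x / r) (-1) with h' | h'
  · have : x ≤ -r := by rwa [div_le_iff₀ hr, neg_one_mul] at h'
    rw [min_eq_right h, max_eq_left h', abs_le]
    constructor <;> linarith
  · have : x - x / r = -(x / r) * (1 - r) := by field_simp; ring
    rw [min_eq_right h, max_eq_right h', this, abs_mul, abs_neg,
      abs_of_nonneg (sub_nonneg.2 hr1)]
    exact mul_le_of_le_one_left (by linarith) (abs_le.2 ⟨h', h⟩)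

lemma regular_totalVariation_normalized {X : Type*} [TopologicalSpace X] [MeasurableSpace X]
    {ν : SignedMeasure X} (hν : ν.totalVariation.Regular) :
    (normalized ν).totalVariation.Regular := by
  rw [normalized, totalVariation_smul]
  infer_instance

lemma norm_eq_one_of_sInt_eq_one {X : Type*} [TopologicalSpace X] [CompactSpace X]
    [MeasurableSpace X] {g : C(X, ℝ)} {μ : SignedMeasure X} (hg : ‖g‖ ≤ 1)
    (hμ : mNorm μ ≤ 1) (h : sInt μ g = 1) : ‖g‖ = 1 := by
  refine le_antisymm hg ?_
  calc 1 = sInt μ g := h.symm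
    _ ≤ mNorm μ * ‖g‖ := sInt_le_mNorm_mul μ g.norm_coe_le_norm
    _ ≤ ‖g‖ := mul_le_of_le_one_left (norm_nonneg g) hμ

section clampDiv

variable {X : Type*} [TopologicalSpace X]

def clampDiv (f : C(X, ℝ)) (r : ℝ) : C(X, ℝ) :=
  ⟨fun t => max (-1) (min 1 (f t / r)), by fun_prop⟩

variable {f : C(X, ℝ)} {r : ℝ}

lemma clampDiv_apply_of_le (hr : 0 < r) {t : X} (h : r ≤ f t) : clampDiv f r t = 1 := by
  have : 1 ≤ f t / r := by rwa [le_div_iff₀ hr, one_mul]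
  simp [clampDiv, min_eq_left this]

lemma clampDiv_apply_of_le_neg (hr : 0 < r) {t : X} (h : f t ≤ -r) : clampDiv f r t = -1 := by
  have : f t / r ≤ -1 := by rwa [div_le_iff₀ hr, neg_one_mul]
  simp only [clampDiv, ContinuousMap.coe_mk]
  rw [min_eq_right (this.trans (by norm_num)), max_eq_left this]

variable [CompactSpace X]

lemma norm_clampDiv_le : ‖clampDiv f r‖ ≤ 1 :=
  (ContinuousMap.norm_le _ zero_le_one).2 fun t => abs_le.2
    ⟨le_max_left _ _, max_le (by norm_num) (min_le_left _ _)⟩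

lemma norm_sub_clampDiv_le (hf : ‖f‖ ≤ 1) (hr : 0 < r) (hr1 : r ≤ 1) :
    ‖f - clampDiv f r‖ ≤ 1 - r :=
  (ContinuousMap.norm_le _ (by linarith)).2 fun t =>
    abs_sub_clamp_div_le ((f.norm_coe_le_norm t).trans hf) hr hr1

end clampDiv

theorem stmt5_general (K : Type*) [TopologicalSpace K] [CompactSpace K] [T2Space K]
    [MeasurableSpace K] [BorelSpace K]
    (f : C(K, ℝ)) (μ : SignedMeasure K) (hμreg : μ.totalVariation.Regular)
    (hf : ‖f‖ ≤ 1) (hμ : mNorm μ ≤ 1)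
    (ε : ℝ) (hε0 : 0 < ε) (hε1 : ε < 1)
    (h : 1 - ε ^ 2 / 6 ≤ sInt μ f) :
    ∃ (f₀ : C(K, ℝ)) (μ₀ : SignedMeasure K), μ₀.totalVariation.Regular ∧
      ‖f₀‖ = 1 ∧ mNorm μ₀ = 1 ∧ sInt μ₀ f₀ = 1 ∧ ‖f - f₀‖ ≤ ε ∧ mNorm (μ - μ₀) ≤ ε := by
  set j := μ.toJordanDecomposition
  have hμj : j.toSignedMeasure = μ := μ.toSignedMeasure_toJordanDecomposition
  set r := 1 - ε / 2 with hr_def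
  have hr : 0 < r := by linarith
  set A := {t | r < f t}
  set B := {t | f t < -r}
  have hA : MeasurableSet A := (isOpen_lt continuous_const f.continuous).measurableSet
  have hB : MeasurableSet B := (isOpen_lt f.continuous continuous_const).measurableSet
  set ν := (j.restrict A B).toSignedMeasure
  set ν' := (j.restrict Aᶜ Bᶜ).toSignedMeasure
  have hsplit : ν + ν' = μ := hμj ▸ j.toSignedMeasure_restrict_add_restrict_compl hA hB
  have hmass : mNorm ν + mNorm ν' = mNorm μ :=
    hμj ▸ j.mNorm_restrict_add_mNorm_restrict_compl hA hB
  have hle : sInt μ f ≤ mNorm ν + r * mNorm ν' :=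
    hμj ▸ j.sInt_le_mNorm_restrict_add_mul f.continuous.measurable
      (fun t => (f.norm_coe_le_norm t).trans hf) hA hB (fun _ ht => not_lt.1 ht)
      (fun _ ht => not_lt.1 ht)
  have hm : 0 < mNorm ν := by nlinarith [mNorm_nonneg_s5 ν', hr_def]
  have hdist : mNorm ν' + (1 - mNorm ν) ≤ ε := by nlinarith [mNorm_nonneg_s5 ν', hr_def]
  have hpair : sInt (normalized ν) (clampDiv f r) = 1 := by
    rw [sInt_normalized, j.sInt_restrict hA hB (fun _ ht => clampDiv_apply_of_le hr ht.le)
      (fun _ ht => clampDiv_apply_of_le_neg hr ht.le), div_self hm.ne']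
  have hnorm : mNorm (normalized ν) = 1 := mNorm_normalized hm.ne'
  refine ⟨clampDiv f r, normalized ν,
    regular_totalVariation_normalized (j.regular_totalVariation_restrict hμreg A B),
    norm_eq_one_of_sInt_eq_one norm_clampDiv_le hnorm.le hpair, hnorm, hpair,
    (norm_sub_clampDiv_le hf hr (by linarith)).trans (by linarith), ?_⟩
  rw [← hsplit]
  exact (mNorm_add_sub_normalized_le ν' hm (by linarith [mNorm_nonneg_s5 ν'])).trans hdist

/-- A Bishop-Phelps-Bollobás theorem for functionals on `C(K)`, for `K`
admitting local compensation. -/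
theorem stmt5 (K : Type*) [TopologicalSpace K] [CompactSpace K] [T2Space K]
    [MeasurableSpace K] [BorelSpace K]
    (hK : AdmitsLocalCompensation K)
    (f : C(K, ℝ)) (μ : SignedMeasure K) (hμreg : μ.totalVariation.Regular)
    (hf : ‖f‖ ≤ 1) (hμ : mNorm μ ≤ 1)
    (ε : ℝ) (hε0 : 0 < ε) (hε1 : ε < 1)
    (h : 1 - ε ^ 2 / 6 ≤ sInt μ f) :
    ∃ (f₀ : C(K, ℝ)) (μ₀ : SignedMeasure K), μ₀.totalVariation.Regular ∧
      ‖f₀‖ = 1 ∧ mNorm μ₀ = 1 ∧ sInt μ₀ f₀ = 1 ∧ ‖f - f₀‖ ≤ ε ∧ mNorm (μ - μ₀) ≤ ε :=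
  stmt5_general K f μ hμreg hf hμ ε hε0 hε1 h
end
end

section
/- The Cantor set 𝒞 = {0,1}^ℕ admits a compensation function, i.e. there exists a weak*-to-weak*-continuous map ξ : M(𝒞) → M(𝒞) such that ξ(μ) is a compensation of μ for every μ ∈ M(𝒞). -/
open MeasureTheory

noncomputable section

variable {K : Type*} [TopologicalSpace K] [MeasurableSpace K]

/-- The Cantor set `{0,1}^ℕ`. -/
def Cantor : Type := ℕ → Bool

instance : TopologicalSpace Cantor := inferInstanceAs (TopologicalSpace (ℕ → Bool))
instance : CompactSpace Cantor := inferInstanceAs (CompactSpace (ℕ → Bool))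
instance : T2Space Cantor := inferInstanceAs (T2Space (ℕ → Bool))
instance : MeasurableSpace Cantor := borel Cantor
instance : BorelSpace Cantor := ⟨rfl⟩

/-!
For a signed measure `μ` on the Cantor set, let `s w = μ (cyl w)` be the masses of the cylinders,
a function on the binary tree of finite words with `s w = s (false :: w) + s (true :: w)`.
Distribute the mass `max (μ univ) 0` greedily down the tree: a left child receives as much as its
positive part `max (s _) 0` allows, the right child the rest. The allocation is additive, so it
is the cylinder function of a finite measure `ν` (the image of Lebesgue measure under the quantile
map of the corresponding nested intervals); as `max (s ·) 0` is subadditive, every cylinder gets at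
most `μ⁺` of it, hence `ν ≤ μ⁺` by outer regularity, and `ν univ = max (μ univ) 0`.

The allocation is built from the `s w` by `min`, `max` and subtraction, and cylinders are clopen,
so each `ν (cyl w)` depends weak*-continuously on `μ`. Since continuous functions are uniformly
approximated by step functions on cylinders, so does `∫ g ∂ν` for every continuous `g`.
-/

lemma MeasureTheory.SignedMeasure.apply_eq_real_posPart_sub_real_negPart {α : Type*}
    [MeasurableSpace α] (μ : SignedMeasure α) {A : Set α} (hA : MeasurableSet A) :
    μ A = μ.toJordanDecomposition.posPart.real A - μ.toJordanDecomposition.negPart.real A := by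
  conv_lhs => rw [← μ.toSignedMeasure_toJordanDecomposition]
  rw [JordanDecomposition.toSignedMeasure, _root_.sub_apply,
    Measure.toSignedMeasure_apply_measurable hA, Measure.toSignedMeasure_apply_measurable hA]

lemma MeasureTheory.Measure.toJordanDecomposition_toSignedMeasure {α : Type*}
    [MeasurableSpace α] (ν : Measure α) [IsFiniteMeasure ν] :
    ν.toSignedMeasure.toJordanDecomposition = ⟨ν, 0, .zero_right⟩ :=
  SignedMeasure.toJordanDecomposition_eq (by simp [JordanDecomposition.toSignedMeasure])

lemma MeasureTheory.Measure.totalVariation_toSignedMeasure {α : Type*} [MeasurableSpace α]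
    (ν : Measure α) [IsFiniteMeasure ν] : ν.toSignedMeasure.totalVariation = ν := by
  rw [SignedMeasure.totalVariation, ν.toJordanDecomposition_toSignedMeasure]
  exact add_zero ν

lemma sInt_toSignedMeasure_s10 {K : Type*} [TopologicalSpace K] [MeasurableSpace K] (ν : Measure K)
    [IsFiniteMeasure ν] (f : K → ℝ) :
    sInt ν.toSignedMeasure f = ∫ x, f x ∂ν := by
  rw [sInt, ν.toJordanDecomposition_toSignedMeasure]
  simp

lemma continuous_wstar_iff {K : Type*} [TopologicalSpace K] [MeasurableSpace K] {X : Type*}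
    [TopologicalSpace X] {F : X → SignedMeasure K} :
    Continuous F ↔ ∀ g : C(K, ℝ), Continuous fun x => sInt (F x) g :=
  continuous_induced_rng.trans continuous_pi_iff

lemma continuous_signedMeasure_apply {K : Type*} [TopologicalSpace K] [MeasurableSpace K]
    {A : Set K} (hA : IsClopen A) (hAm : MeasurableSet A) :
    Continuous fun μ : SignedMeasure K => μ A := by
  let g : C(K, ℝ) := ⟨A.indicator 1, hA.continuous_indicator continuous_const⟩
  have hg : ∀ μ : SignedMeasure K, sInt μ g = μ A := fun μ => by
    rw [sInt, μ.apply_eq_real_posPart_sub_real_negPart hAm]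
    exact congrArg₂ (· - ·) (integral_indicator_one hAm) (integral_indicator_one hAm)
  simpa only [id_eq, hg] using continuous_wstar_iff.1 continuous_id g

namespace Cantor

open PiNat Set Topology

instance : TopologicalSpace.PseudoMetrizableSpace Cantor :=
  inferInstanceAs (TopologicalSpace.PseudoMetrizableSpace (ℕ → Bool))

/-- The cylinder of the sequences whose first `w.length` terms, read backwards, are `w`
(the convention of `PiNat.res`). -/
def cyl (w : List Bool) : Set Cantor := {x | res x w.length = w}

def words (n : ℕ) : Finset (List Bool) := (List.finite_length_eq Bool n).toFinset

lemma mem_words {n : ℕ} {w : List Bool} : w ∈ words n ↔ w.length = n := by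
  simp [words]

lemma mem_cyl {x : Cantor} {w : List Bool} : x ∈ cyl w ↔ res x w.length = w := Iff.rfl

lemma length_res (x : Cantor) (n : ℕ) : (res x n).length = n := res_length x n

lemma mem_cyl_res (x : Cantor) (n : ℕ) : x ∈ cyl (res x n) := by
  rw [mem_cyl, length_res]

lemma cyl_res (x : Cantor) (n : ℕ) : cyl (res x n) = cylinder x n := by
  ext y
  rw [mem_cyl, length_res]
  exact (Set.ext_iff.1 (cylinder_eq_res x n) y).symm

lemma cyl_cons (b : Bool) (w : List Bool) : cyl (b :: w) = cyl w ∩ {x | x w.length = b} := by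
  ext x
  exact List.cons_eq_cons.trans and_comm

lemma cyl_nil : cyl [] = univ := eq_univ_of_forall fun _ => rfl

lemma isClopen_cyl (w : List Bool) : IsClopen (cyl w) := by
  induction w with
  | nil => exact cyl_nil ▸ isClopen_univ
  | cons b w ih =>
    rw [cyl_cons]
    exact ih.inter ((isClopen_discrete {b}).preimage (continuous_apply (A := fun _ => Bool) _))

lemma measurableSet_cyl (w : List Bool) : MeasurableSet (cyl w) :=
  (isClopen_cyl w).isOpen.measurableSet

lemma disjoint_cyl {w w' : List Bool} (hlen : w.length = w'.length) (hne : w ≠ w') :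
    Disjoint (cyl w) (cyl w') :=
  Set.disjoint_left.2 fun _ hw hw' => hne (hw.symm.trans (hlen ▸ hw'))

lemma pairwiseDisjoint_cyl_words (n : ℕ) : (words n : Set (List Bool)).PairwiseDisjoint cyl :=
  fun _ hw _ hw' hne => disjoint_cyl ((mem_words.1 hw).trans (mem_words.1 hw').symm) hne

lemma iUnion_cyl_words (n : ℕ) : ⋃ w ∈ words n, cyl w = univ :=
  eq_univ_of_forall fun x => mem_biUnion (mem_words.2 (res_length x n)) (mem_cyl_res x n)

lemma exists_cyl_res_subset {U : Set Cantor} (hU : IsOpen U) {x : Cantor} (hx : x ∈ U) :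
    ∃ n, cyl (res x n) ⊆ U := by
  obtain ⟨_, ⟨y, n, rfl⟩, hxy, hsub⟩ :=
    (isTopologicalBasis_cylinders fun _ : ℕ => Bool).exists_subset_of_mem_open hx hU
  refine ⟨n, ?_⟩
  rwa [cyl_res, mem_cylinder_iff_eq.1 hxy]

lemma cyl_nonempty (w : List Bool) : (cyl w).Nonempty := by
  induction w with
  | nil => exact ⟨fun _ => false, rfl⟩
  | cons b w ih =>
    obtain ⟨x, hx⟩ := ih
    refine ⟨Function.update x w.length b, ?_⟩
    rw [cyl_cons]
    refine ⟨(res_eq_res.2 fun m hm => Function.update_of_ne hm.ne _ _).trans hx,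
      Function.update_self _ _ _⟩

lemma res_eq_res_of_mem_cyl {x y : Cantor} {w : List Bool} (hx : x ∈ cyl w) (hy : y ∈ cyl w) :
    res x w.length = res y w.length :=
  hx.trans hy.symm

lemma cyl_res_succ_subset (x : Cantor) (n : ℕ) : cyl (res x (n + 1)) ⊆ cyl (res x n) := by
  rw [cyl_res, cyl_res]
  exact cylinder_anti x n.le_succ

lemma cyl_false_union_cyl_true (w : List Bool) : cyl (false :: w) ∪ cyl (true :: w) = cyl w := by
  rw [cyl_cons, cyl_cons, ← inter_union_distrib_left]
  refine inter_eq_left.2 fun x _ => ?_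
  cases h : x w.length
  exacts [Or.inl h, Or.inr h]

def cylPoint (w : List Bool) : Cantor := (cyl_nonempty w).some

lemma cylPoint_mem_cyl (w : List Bool) : cylPoint w ∈ cyl w := (cyl_nonempty w).some_mem

lemma measurable_of_measurableSet_preimage_cyl {α : Type*} [MeasurableSpace α] {f : α → Cantor}
    (hf : ∀ w, MeasurableSet (f ⁻¹' cyl w)) : Measurable f := by
  refine measurable_of_isOpen fun U hU => ?_
  have hU_eq : U = ⋃ (w : List Bool) (_ : cyl w ⊆ U), cyl w := by
    refine Subset.antisymm (fun x hx => ?_) (iUnion₂_subset fun _ => id)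
    obtain ⟨n, hn⟩ := exists_cyl_res_subset hU hx
    exact mem_iUnion₂.2 ⟨_, hn, mem_cyl_res x n⟩
  rw [hU_eq, preimage_iUnion₂]
  exact .iUnion fun w => .iUnion fun _ => hf w

lemma measure_isOpen_le_of_cyl_le {ν ρ : Measure Cantor} (h : ∀ w, ν (cyl w) ≤ ρ (cyl w))
    {U : Set Cantor} (hU : IsOpen U) : ν U ≤ ρ U := by
  classical
  set V : ℕ → Set Cantor := fun n => {x | cyl (res x n) ⊆ U}
  have hV : ∀ n, V n = ⋃ w ∈ (words n).filter fun w => cyl w ⊆ U, cyl w := fun n => by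
    ext x
    simp only [V, mem_ofPred_eq, mem_iUnion, Finset.mem_filter, mem_words, exists_prop]
    refine ⟨fun hx => ⟨_, ⟨length_res x n, hx⟩, mem_cyl_res x n⟩, ?_⟩
    rintro ⟨w, ⟨rfl, hw⟩, hx⟩
    rwa [hx]
  have hV_le : ∀ n, ν (V n) ≤ ρ (V n) := fun n => by
    have hd := (pairwiseDisjoint_cyl_words n).subset
      (Finset.coe_subset.2 (Finset.filter_subset (fun w => cyl w ⊆ U) _))
    rw [hV, measure_biUnion_finset hd fun w _ => measurableSet_cyl w,
      measure_biUnion_finset hd fun w _ => measurableSet_cyl w]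
    exact Finset.sum_le_sum fun w _ => h w
  have hV_mono : Monotone V :=
    monotone_nat_of_le_succ fun n x hx => (cyl_res_succ_subset x n).trans hx
  have hV_union : ⋃ n, V n = U := by
    refine Subset.antisymm (iUnion_subset fun n x hx => hx (mem_cyl_res x n)) fun x hx => ?_
    exact mem_iUnion.2 (exists_cyl_res_subset hU hx)
  calc ν U = ⨆ n, ν (V n) := by rw [← hV_union, hV_mono.measure_iUnion]
    _ ≤ ⨆ n, ρ (V n) := iSup_mono hV_le
    _ ≤ ρ U := iSup_le fun n => measure_mono (hV_union ▸ subset_iUnion V n)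

lemma measure_le_of_cyl_le {ν ρ : Measure Cantor} [IsFiniteMeasure ρ]
    (h : ∀ w, ν (cyl w) ≤ ρ (cyl w)) : ν ≤ ρ := by
  refine Measure.le_iff'.2 fun s => ?_
  rw [s.measure_eq_iInf_isOpen ρ]
  exact le_iInf₂ fun U hsU => le_iInf fun hU =>
    (measure_mono hsU).trans (measure_isOpen_le_of_cyl_le h hU)

lemma exists_dist_lt_of_res_eq (g : C(Cantor, ℝ)) {ε : ℝ} (hε : 0 < ε) :
    ∃ n, ∀ x y : Cantor, res x n = res y n → dist (g x) (g y) < ε := by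
  let _ : MetricSpace (ℕ → Bool) := PiNat.metricSpaceOfDiscreteUniformity fun _ => rfl
  obtain ⟨δ, hδ, hg⟩ := Metric.uniformContinuous_iff.1
    (CompactSpace.uniformContinuous_of_continuous (α := ℕ → Bool) g.continuous) ε hε
  obtain ⟨n, hn⟩ := exists_pow_lt_of_lt_one hδ one_half_lt_one
  refine ⟨n, fun x y hxy => hg ((mem_cylinder_iff_dist_le.1 ?_).trans_lt hn)⟩
  rw [← cyl_res, ← hxy]
  exact mem_cyl_res _ n

lemma integral_eq_sum_setIntegral_cyl {ν : Measure Cantor} {f : Cantor → ℝ}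
    (hf : Integrable f ν) (n : ℕ) :
    ∫ y, f y ∂ν = ∑ w ∈ words n, ∫ y in cyl w, f y ∂ν := by
  rw [← setIntegral_univ, ← iUnion_cyl_words n]
  exact integral_biUnion_finset _ (fun w _ => measurableSet_cyl w) (pairwiseDisjoint_cyl_words n)
    fun w _ => hf.integrableOn

lemma dist_integral_sum_cyl_le {ν : Measure Cantor} [IsFiniteMeasure ν] (g : C(Cantor, ℝ))
    {n : ℕ} {δ : ℝ} (hg : ∀ x y : Cantor, res x n = res y n → dist (g x) (g y) ≤ δ) :
    dist (∫ y, g y ∂ν) (∑ w ∈ words n, g (cylPoint w) * ν.real (cyl w))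
      ≤ δ * ν.real univ := by
  have hint : Integrable g ν :=
    g.continuous.integrable_of_hasCompactSupport (HasCompactSupport.of_compactSpace _)
  have hsum : ∫ y, g y ∂ν - ∑ w ∈ words n, g (cylPoint w) * ν.real (cyl w)
      = ∑ w ∈ words n, ∫ y in cyl w, (g y - g (cylPoint w)) ∂ν := by
    rw [integral_eq_sum_setIntegral_cyl hint n, ← Finset.sum_sub_distrib]
    refine Finset.sum_congr rfl fun w _ => ?_
    rw [integral_sub hint.integrableOn (integrableOn_const (measure_ne_top _ _)), setIntegral_const,
      smul_eq_mul, mul_comm]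
  calc dist (∫ y, g y ∂ν) (∑ w ∈ words n, g (cylPoint w) * ν.real (cyl w))
      ≤ ∑ w ∈ words n, ‖∫ y in cyl w, (g y - g (cylPoint w)) ∂ν‖ := by
        rw [dist_eq_norm, hsum]
        exact norm_sum_le _ _
    _ ≤ ∑ w ∈ words n, δ * ν.real (cyl w) := by
        refine Finset.sum_le_sum fun w hw => norm_setIntegral_le_of_norm_le_const
          (measure_lt_top _ _) fun y hy => hg y (cylPoint w) ?_
        rw [← mem_words.1 hw]
        exact res_eq_res_of_mem_cyl hy (cylPoint_mem_cyl w)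
    _ = δ * ν.real univ := by
        rw [← Finset.mul_sum, ← measureReal_biUnion_finset (pairwiseDisjoint_cyl_words n)
          fun w _ => measurableSet_cyl w, iUnion_cyl_words]

lemma continuous_integral_of_continuous_cyl {X : Type*} [TopologicalSpace X]
    {ν : X → Measure Cantor} [∀ x, IsFiniteMeasure (ν x)]
    (hν : ∀ w, Continuous fun x => (ν x).real (cyl w)) (g : C(Cantor, ℝ)) :
    Continuous fun x => ∫ y, g y ∂ν x := by
  refine continuous_of_locally_uniform_approx_of_continuousAt fun x₀ u hu => ?_
  obtain ⟨ε, hε, hεu⟩ := Metric.mem_uniformity_dist.1 hu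
  set B := (ν x₀).real univ + 1
  have hB : 0 < B := by positivity
  obtain ⟨n, hn⟩ := exists_dist_lt_of_res_eq g (div_pos hε hB)
  have hmass : ∀ᶠ x in 𝓝 x₀, (ν x).real univ < B := by
    have hmass_cont : Continuous fun x => (ν x).real univ := cyl_nil ▸ hν []
    exact hmass_cont.continuousAt.eventually_lt (x₀ := x₀) continuousAt_const (lt_add_one _)
  refine ⟨_, hmass, fun x => ∑ w ∈ words n, g (cylPoint w) * (ν x).real (cyl w),
    (continuous_finsetSum _ fun w _ => continuous_const.mul (hν w)).continuousAt,
    fun x hx => hεu ?_⟩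
  calc dist (∫ y, g y ∂ν x) (∑ w ∈ words n, g (cylPoint w) * (ν x).real (cyl w))
      ≤ ε / B * (ν x).real univ := dist_integral_sum_cyl_le g fun y z h => (hn y z h).le
    _ < ε := by
      rw [div_mul_eq_mul_div, div_lt_iff₀ hB]
      exact mul_lt_mul_of_pos_left hx hε

section TreeMeasure

variable (t : List Bool → ℝ)

/-- `[leftEnd t w, leftEnd t w + t w)` is the interval assigned to the word `w`; those of
`false :: w` and `true :: w` are the left and right parts of that of `w`. -/
def leftEnd : List Bool → ℝ
  | [] => 0
  | false :: w => leftEnd w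
  | true :: w => leftEnd w + t (false :: w)

/-- For `x ∈ [0, t [])`, the word of length `n` whose interval contains `x`. -/
def descent (x : ℝ) : ℕ → List Bool
  | 0 => []
  | n + 1 => decide (leftEnd t (true :: descent x n) ≤ x) :: descent x n

def quantile (x : ℝ) : Cantor := fun n => decide (leftEnd t (true :: descent t x n) ≤ x)

def treeMeasure : Measure Cantor := (volume.restrict (Ico 0 (t []))).map (quantile t)

instance : IsFiniteMeasure (treeMeasure t) := by
  unfold treeMeasure
  infer_instance

lemma res_quantile (x : ℝ) (n : ℕ) : res (quantile t x) n = descent t x n := by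
  induction n with
  | zero => rfl
  | succ n ih =>
    show quantile t x n :: res (quantile t x) n = _
    rw [ih]
    rfl

lemma quantile_preimage_cyl (w : List Bool) :
    quantile t ⁻¹' cyl w = {x | descent t x w.length = w} := by
  ext x
  exact Iff.of_eq (congrArg (· = w) (res_quantile t x w.length))

lemma setOf_descent_eq_cons (n : ℕ) (b : Bool) (w : List Bool) :
    {x | descent t x (n + 1) = b :: w}
      = {x | descent t x n = w} ∩ {x | decide (leftEnd t (true :: w) ≤ x) = b} := by
  ext x
  refine List.cons_eq_cons.trans ⟨fun ⟨hb, hw⟩ => ⟨hw, hw ▸ hb⟩, fun ⟨hw, hb⟩ => ⟨?_, hw⟩⟩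
  rwa [hw]

lemma measurableSet_setOf_descent_eq (n : ℕ) (w : List Bool) :
    MeasurableSet {x | descent t x n = w} := by
  induction n generalizing w with
  | zero => exact .const ([] = w)
  | succ n ih =>
    cases w with
    | nil => simp [descent]
    | cons b w =>
      rw [setOf_descent_eq_cons]
      have hdec : Measurable fun x : ℝ => decide (leftEnd t (true :: w) ≤ x) :=
        measurable_to_bool <| by
          simp only [preimage, mem_singleton_iff, decide_eq_true_eq]
          exact measurableSet_Ici
      exact (ih w).inter (hdec (measurableSet_singleton b))

lemma measurable_quantile : Measurable (quantile t) :=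
  measurable_of_measurableSet_preimage_cyl fun w => by
    rw [quantile_preimage_cyl]
    exact measurableSet_setOf_descent_eq t _ w

variable {t}

lemma setOf_descent_eq_inter_Ico (ht : ∀ w, 0 ≤ t w)
    (hadd : ∀ w, t (false :: w) + t (true :: w) = t w) (w : List Bool) :
    {x | descent t x w.length = w} ∩ Ico 0 (t []) = Ico (leftEnd t w) (leftEnd t w + t w) := by
  induction w with
  | nil => simp [descent, leftEnd]
  | cons b w ih =>
    have h0 := ht (false :: w)
    have h1 := ht (true :: w)
    rw [List.length_cons, setOf_descent_eq_cons, inter_right_comm, ih, ← hadd w]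
    ext x
    cases b
    · simp only [mem_inter_iff, mem_Ico, mem_ofPred_eq, decide_eq_false_iff_not, not_le]
      simp only [leftEnd]
      exact ⟨fun ⟨⟨hl, _⟩, hr⟩ => ⟨hl, hr⟩,
        fun ⟨hl, hr⟩ => ⟨⟨hl, by linarith⟩, hr⟩⟩
    · simp only [mem_inter_iff, mem_Ico, mem_ofPred_eq, decide_eq_true_eq]
      simp only [leftEnd]
      exact ⟨fun ⟨⟨_, hr⟩, hl⟩ => ⟨hl, by linarith⟩,
        fun ⟨hl, hr⟩ => ⟨⟨by linarith, by linarith⟩, hl⟩⟩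

lemma treeMeasure_cyl (ht : ∀ w, 0 ≤ t w) (hadd : ∀ w, t (false :: w) + t (true :: w) = t w)
    (w : List Bool) : treeMeasure t (cyl w) = ENNReal.ofReal (t w) := by
  rw [treeMeasure, Measure.map_apply (measurable_quantile t) (measurableSet_cyl w),
    Measure.restrict_apply (measurable_quantile t (measurableSet_cyl w)), quantile_preimage_cyl,
    setOf_descent_eq_inter_Ico ht hadd, Real.volume_Ico, add_sub_cancel_left]

lemma treeMeasure_real_cyl (ht : ∀ w, 0 ≤ t w)
    (hadd : ∀ w, t (false :: w) + t (true :: w) = t w) (w : List Bool) :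
    (treeMeasure t).real (cyl w) = t w := by
  rw [measureReal_def, treeMeasure_cyl ht hadd, ENNReal.toReal_ofReal (ht w)]

end TreeMeasure

section Allocation

variable (s : List Bool → ℝ)

def alloc : List Bool → ℝ
  | [] => max (s []) 0
  | false :: w => min (max (s (false :: w)) 0) (alloc w)
  | true :: w => alloc w - min (max (s (false :: w)) 0) (alloc w)

lemma alloc_false_add_alloc_true (w : List Bool) :
    alloc s (false :: w) + alloc s (true :: w) = alloc s w :=
  add_sub_cancel _ _

lemma alloc_nonneg (w : List Bool) : 0 ≤ alloc s w := by
  induction w with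
  | nil => exact le_max_right _ _
  | cons b w ih =>
    cases b
    · exact le_min (le_max_right _ _) ih
    · exact sub_nonneg.2 (min_le_right _ _)

variable {s}

lemma alloc_le (hs : ∀ w, s (false :: w) + s (true :: w) = s w) (w : List Bool) :
    alloc s w ≤ max (s w) 0 := by
  induction w with
  | nil => exact le_rfl
  | cons b w ih =>
    cases b
    · exact min_le_left _ _
    · have hsplit : max (s w) 0 ≤ max (s (false :: w)) 0 + max (s (true :: w)) 0 :=
        max_le (hs w ▸ add_le_add (le_max_left _ _) (le_max_left _ _))
          (add_nonneg (le_max_right _ _) (le_max_right _ _))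
      show alloc s w - min (max (s (false :: w)) 0) (alloc s w) ≤ _
      rcases min_cases (max (s (false :: w)) 0) (alloc s w) with ⟨h, _⟩ | ⟨h, _⟩ <;> rw [h]
      · linarith
      · simp

lemma continuous_alloc {X : Type*} [TopologicalSpace X] {s : X → List Bool → ℝ}
    (hs : ∀ w, Continuous fun x => s x w) (w : List Bool) :
    Continuous fun x => alloc (s x) w := by
  induction w with
  | nil => exact (hs []).max continuous_const
  | cons b w ih =>
    cases b
    · exact ((hs _).max continuous_const).min ih
    · exact ih.sub (((hs _).max continuous_const).min ih)

end Allocation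

def cylMass (μ : SignedMeasure Cantor) (w : List Bool) : ℝ := μ (cyl w)

lemma cylMass_false_add_cylMass_true (μ : SignedMeasure Cantor) (w : List Bool) :
    cylMass μ (false :: w) + cylMass μ (true :: w) = cylMass μ w := by
  rw [cylMass, cylMass, cylMass, ← cyl_false_union_cyl_true w]
  exact (μ.of_union (disjoint_cyl (w := false :: w) (w' := true :: w) rfl (by simp))
    (measurableSet_cyl _) (measurableSet_cyl _)).symm

def compensation (μ : SignedMeasure Cantor) : Measure Cantor := treeMeasure (alloc (cylMass μ))

instance (μ : SignedMeasure Cantor) : IsFiniteMeasure (compensation μ) := by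
  unfold compensation
  infer_instance

lemma compensation_real_cyl (μ : SignedMeasure Cantor) (w : List Bool) :
    (compensation μ).real (cyl w) = alloc (cylMass μ) w :=
  treeMeasure_real_cyl (alloc_nonneg _) (alloc_false_add_alloc_true _) w

lemma compensation_le_posPart (μ : SignedMeasure Cantor) :
    compensation μ ≤ μ.toJordanDecomposition.posPart := by
  refine measure_le_of_cyl_le fun w => ?_
  rw [compensation, treeMeasure_cyl (alloc_nonneg _) (alloc_false_add_alloc_true _)]
  refine ENNReal.ofReal_le_of_le_toReal
    ((alloc_le (cylMass_false_add_cylMass_true μ) w).trans (max_le ?_ ENNReal.toReal_nonneg))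
  rw [cylMass, μ.apply_eq_real_posPart_sub_real_negPart (measurableSet_cyl w), measureReal_def]
  exact sub_le_self _ measureReal_nonneg

lemma isCompensation_compensation (μ : SignedMeasure Cantor) :
    IsCompensation μ (compensation μ).toSignedMeasure := by
  have huniv : (compensation μ).real univ = max (μ univ) 0 := by
    rw [← cyl_nil, compensation_real_cyl]
    rfl
  rw [IsCompensation]
  split_ifs with hμ
  · refine ⟨Measure.zero_le_toSignedMeasure _,
      (Measure.toSignedMeasure_le_toSignedMeasure_iff _ _).2 (compensation_le_posPart μ), ?_⟩
    rw [Measure.toSignedMeasure_apply_measurable .univ, huniv, max_eq_left hμ.le]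
  · rw [max_eq_right (not_lt.1 hμ), measureReal_eq_zero_iff, Measure.measure_univ_eq_zero]
      at huniv
    exact (Measure.toSignedMeasure_congr huniv).trans Measure.toSignedMeasure_zero

lemma continuous_compensation :
    Continuous fun μ : SignedMeasure Cantor => (compensation μ).toSignedMeasure := by
  refine continuous_wstar_iff.2 fun g => ?_
  simp_rw [sInt_toSignedMeasure_s10]
  refine continuous_integral_of_continuous_cyl (fun w => ?_) g
  simp_rw [compensation_real_cyl]
  exact continuous_alloc (fun w => continuous_signedMeasure_apply (isClopen_cyl w)
    (measurableSet_cyl w)) w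

end Cantor

open Cantor in
/-- The Cantor set admits a compensation function. -/
theorem stmt10 : ∃ ξ : MK Cantor → MK Cantor, IsCompensationFunction ξ := by
  have hreg (μ : SignedMeasure Cantor) :
      (compensation μ).toSignedMeasure.totalVariation.Regular := by
    rw [Measure.totalVariation_toSignedMeasure]
    infer_instance
  exact ⟨fun μ => ⟨_, hreg μ.1⟩,
    (continuous_compensation.comp continuous_subtype_val).subtype_mk fun μ => hreg μ.1,
    fun μ => isCompensation_compensation μ.1⟩

end
end

section
/- Let K be a compact Hausdorff space. If the closed unit ball B_{M(K)}, equipped with the weak* topology (a compact Hausdorff space), admits local compensation, then K admits a B_{M(K)}-compensation function. -/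
open MeasureTheory

noncomputable section

variable {K : Type*} [TopologicalSpace K] [MeasurableSpace K]

instance (K : Type*) [TopologicalSpace K] [MeasurableSpace K] :
    MeasurableSpace (BMK K) := borel (BMK K)

instance (K : Type*) [TopologicalSpace K] [MeasurableSpace K] :
    BorelSpace (BMK K) := ⟨rfl⟩

/-!
The Dirac map `δ : K → B_{M(K)}` is a closed embedding (the ball is Hausdorff because a regular
measure is determined by its integrals against `C(K)`), so `μ ↦ δ_* μ` lies in `W(B_{M(K)})`.
A local compensation `G` of it satisfies `0 ≤ G μ ≤ δ_* μ⁺`, so `G μ` is concentrated on `δ(K)` and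
equals `δ_* ξ(μ)` for `ξ(μ) := ρ_* G(μ)`, where `ρ` is a measurable left inverse of `δ`.
Being a compensation is reflected along the embedding `δ`, and
`∫ g dξ(μ) = ∫ (ν ↦ ∫ g dν) dG(μ)` depends continuously on `μ`.
-/

open Set

section SignedMeasures

variable {α β : Type*} [MeasurableSpace α] [MeasurableSpace β]

namespace MeasureTheory

theorem VectorMeasure.map_apply_image {M : Type*} [AddCommMonoid M] [TopologicalSpace M]
    (v : VectorMeasure α M) {f : α → β} (hf : MeasurableEmbedding f) {A : Set α}
    (hA : MeasurableSet A) : v.map f (f '' A) = v A := by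
  rw [VectorMeasure.map_apply _ hf.measurable (hf.measurableSet_image' hA),
    hf.injective.preimage_image]

theorem VectorMeasure.map_le_map_iff {M : Type*} [AddCommMonoid M] [TopologicalSpace M]
    [PartialOrder M] {v w : VectorMeasure α M} {f : α → β} (hf : MeasurableEmbedding f) :
    v.map f ≤ w.map f ↔ v ≤ w := by
  refine ⟨fun h A hA => ?_, fun h A hA => ?_⟩
  · simpa only [map_apply_image _ hf hA] using h _ (hf.measurableSet_image' hA)
  · simpa only [VectorMeasure.map_apply _ hf.measurable hA] using h _ (hf.measurable hA)

theorem VectorMeasure.map_injective {M : Type*} [AddCommMonoid M] [TopologicalSpace M]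
    {f : α → β} (hf : MeasurableEmbedding f) :
    Function.Injective fun v : VectorMeasure α M => v.map f := by
  intro v w h
  ext A hA
  rw [← map_apply_image v hf hA, ← map_apply_image w hf hA]
  exact congrArg (fun u : VectorMeasure β M => u (f '' A)) h

theorem VectorMeasure.map_map_of_leftInverse {M : Type*} [AddCommMonoid M] [TopologicalSpace M]
    [T2Space M] {f : α → β} (hf : MeasurableEmbedding f) {ρ : β → α} (hρ : Measurable ρ)
    (hρf : Function.LeftInverse ρ f) {v : VectorMeasure β M}
    (hv : ∀ A, MeasurableSet A → A ⊆ (range f)ᶜ → v A = 0) :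
    (v.map ρ).map f = v := by
  ext A hA
  have hR := hf.measurableSet_range
  have hB : MeasurableSet (ρ ⁻¹' (f ⁻¹' A)) := hρ (hf.measurable hA)
  have hinter : ρ ⁻¹' (f ⁻¹' A) ∩ range f = A ∩ range f := by
    ext y
    constructor <;> rintro ⟨hy, x, rfl⟩ <;> exact ⟨by simpa [hρf x] using hy, x, rfl⟩
  have split : ∀ S, MeasurableSet S → v S = v (S ∩ range f) := fun S hS => by
    rw [← VectorMeasure.of_add_of_sdiff (hS.inter hR) hS inter_subset_left,
      hv _ (hS.diff (hS.inter hR)) fun y hy hyR => hy.2 ⟨hy.1, hyR⟩, add_zero]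
  rw [VectorMeasure.map_apply _ hf.measurable hA, VectorMeasure.map_apply _ hρ (hf.measurable hA),
    split _ hB, hinter, ← split _ hA]

theorem Measure.toSignedMeasure_map (m : Measure α) [IsFiniteMeasure m] {f : α → β}
    (hf : Measurable f) : (m.map f).toSignedMeasure = m.toSignedMeasure.map f := by
  ext A hA
  rw [VectorMeasure.map_apply _ hf hA, Measure.toSignedMeasure_apply_measurable hA,
    Measure.toSignedMeasure_apply_measurable (hf hA), measureReal_def, measureReal_def,
    Measure.map_apply hf hA]

namespace SignedMeasure

theorem toJordanDecomposition_map (s : SignedMeasure α) {f : α → β}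
    (hf : MeasurableEmbedding f) :
    SignedMeasure.toJordanDecomposition (s.map f) =
      ⟨s.toJordanDecomposition.posPart.map f, s.toJordanDecomposition.negPart.map f,
        hf.mutuallySingular_map s.toJordanDecomposition.mutuallySingular⟩ := by
  apply toJordanDecomposition_eq
  change s.map f = (s.toJordanDecomposition.posPart.map f).toSignedMeasure
    - (s.toJordanDecomposition.negPart.map f).toSignedMeasure
  rw [Measure.toSignedMeasure_map _ hf.measurable, Measure.toSignedMeasure_map _ hf.measurable,
    ← VectorMeasure.mapGm_apply, ← VectorMeasure.mapGm_apply, ← VectorMeasure.mapGm_apply,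
    ← map_sub]
  conv_lhs => rw [← s.toSignedMeasure_toJordanDecomposition]
  rfl

theorem totalVariation_map (s : SignedMeasure α) {f : α → β} (hf : MeasurableEmbedding f) :
    SignedMeasure.totalVariation (s.map f) = s.totalVariation.map f := by
  simp only [totalVariation, toJordanDecomposition_map s hf, Measure.map_add _ _ hf.measurable]

theorem toSignedMeasure_posPart_map (s : SignedMeasure α) {f : α → β}
    (hf : MeasurableEmbedding f) :
    (SignedMeasure.toJordanDecomposition (s.map f)).posPart.toSignedMeasure =
      s.toJordanDecomposition.posPart.toSignedMeasure.map f := by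
  simp only [toJordanDecomposition_map s hf, Measure.toSignedMeasure_map _ hf.measurable]

theorem exists_toSignedMeasure_eq_of_nonneg {s : SignedMeasure α} (hs : 0 ≤ s) :
    ∃ (m : Measure α) (_ : IsFiniteMeasure m), m.toSignedMeasure = s :=
  have hs' : 0 ≤[univ] s := (VectorMeasure.le_restrict_univ_iff_le _ _).2 hs
  ⟨s.toMeasureOfZeroLE univ MeasurableSet.univ hs', inferInstance,
    toMeasureOfZeroLE_toSignedMeasure s hs'⟩

end SignedMeasure

theorem Measure.toJordanDecomposition_toSignedMeasure_s11 (m : Measure α) [IsFiniteMeasure m] :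
    m.toSignedMeasure.toJordanDecomposition = ⟨m, 0, .zero_right⟩ :=
  SignedMeasure.toJordanDecomposition_eq <| by
    change m.toSignedMeasure = m.toSignedMeasure - (0 : Measure α).toSignedMeasure
    rw [Measure.toSignedMeasure_zero, sub_zero]

theorem Measure.totalVariation_toSignedMeasure_s11 (m : Measure α) [IsFiniteMeasure m] :
    m.toSignedMeasure.totalVariation = m := by
  simp only [SignedMeasure.totalVariation, toJordanDecomposition_toSignedMeasure_s11, add_zero]

end MeasureTheory

theorem sInt_toSignedMeasure_s11 (m : Measure α) [IsFiniteMeasure m] (g : α → ℝ) :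
    sInt m.toSignedMeasure g = ∫ x, g x ∂m := by
  simp only [sInt, Measure.toJordanDecomposition_toSignedMeasure_s11, integral_zero_measure, sub_zero]

theorem sInt_map (s : SignedMeasure α) {f : α → β} (hf : MeasurableEmbedding f) (g : β → ℝ) :
    sInt (s.map f) g = sInt s (g ∘ f) := by
  simp only [sInt, SignedMeasure.toJordanDecomposition_map s hf, hf.integral_map,
    Function.comp_apply]

theorem mNorm_map (s : SignedMeasure α) {f : α → β} (hf : MeasurableEmbedding f) :
    mNorm (s.map f) = mNorm s := by
  rw [mNorm, mNorm, SignedMeasure.totalVariation_map s hf, hf.map_apply, preimage_univ]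

namespace IsCompensation

variable {s ν : SignedMeasure α}

theorem of_map {f : α → β} (hf : MeasurableEmbedding f)
    (h : IsCompensation (s.map f) (ν.map f)) : IsCompensation s ν := by
  have huniv : ∀ t : SignedMeasure α, t.map f univ = t univ := fun t => by
    rw [VectorMeasure.map_apply _ hf.measurable MeasurableSet.univ, preimage_univ]
  unfold IsCompensation at h ⊢
  rw [SignedMeasure.toSignedMeasure_posPart_map s hf, huniv, huniv] at h
  split_ifs at h ⊢ with hpos
  · obtain ⟨h0, hle, hν⟩ := h
    rw [← VectorMeasure.map_zero f] at h0
    exact ⟨(VectorMeasure.map_le_map_iff hf).1 h0, (VectorMeasure.map_le_map_iff hf).1 hle, hν⟩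
  · exact VectorMeasure.map_injective hf (h.trans (VectorMeasure.map_zero f).symm)

theorem apply_eq_zero (h : IsCompensation s ν) {A : Set α} (hA : MeasurableSet A)
    (hs : s.toJordanDecomposition.posPart A = 0) : ν A = 0 := by
  unfold IsCompensation at h
  split_ifs at h
  · obtain ⟨h0, hle, -⟩ := h
    refine le_antisymm ?_ (h0 A hA)
    simpa [Measure.toSignedMeasure_apply_measurable hA, measureReal_def, hs] using hle A hA
  · simp [h]

theorem map_map_of_leftInverse {f : α → β} (hf : MeasurableEmbedding f) {ρ : β → α}
    (hρ : Measurable ρ) (hρf : Function.LeftInverse ρ f) {ν : SignedMeasure β}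
    (h : IsCompensation (s.map f) ν) : (ν.map ρ).map f = ν :=
  VectorMeasure.map_map_of_leftInverse hf hρ hρf fun A hA hAf => h.apply_eq_zero hA <| by
    simp only [SignedMeasure.toJordanDecomposition_map s hf]
    rw [hf.map_apply, preimage_eq_empty (subset_compl_iff_disjoint_right.1 hAf),
      measure_empty]

theorem totalVariation_le (h : IsCompensation s ν) : ν.totalVariation ≤ s.totalVariation := by
  unfold IsCompensation at h
  split_ifs at h
  · obtain ⟨h0, hle, -⟩ := h
    obtain ⟨n, _, rfl⟩ := SignedMeasure.exists_toSignedMeasure_eq_of_nonneg h0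
    rw [Measure.totalVariation_toSignedMeasure_s11]
    exact ((Measure.toSignedMeasure_le_toSignedMeasure_iff _ _).1 hle).trans
      (Measure.le_add_right le_rfl)
  · rw [h, SignedMeasure.totalVariation_zero]
    exact Measure.zero_le _

end IsCompensation

end SignedMeasures

section Regularity

variable {α β : Type*} [TopologicalSpace α] [MeasurableSpace α] [BorelSpace α]

namespace MeasureTheory.Measure

theorem Regular.of_le [T2Space α] {m ν : Measure α} [IsFiniteMeasure m] [m.Regular] (h : ν ≤ m) :
    ν.Regular := by
  have : IsFiniteMeasure ν := isFiniteMeasure_of_le m h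
  refine have : InnerRegularCompactLTTop ν := ⟨fun A ⟨hA, _⟩ r hr => ?_⟩; inferInstance
  obtain ⟨C, hCA, hC, hmC⟩ :=
    hA.exists_isCompact_sdiff_lt (measure_ne_top m A) (tsub_pos_of_lt hr).ne'
  refine ⟨C, hCA, hC, lt_of_not_ge fun hCr => ?_⟩
  have : ν A < ν A := calc
    ν A ≤ ν C + ν (A \ C) := measure_le_inter_add_sdiff _ _ _ |>.trans <| by
        rw [inter_eq_right.2 hCA]
    _ < r + (ν A - r) := ENNReal.add_lt_add_of_le_of_lt (measure_ne_top ν C) hCr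
        ((le_iff'.1 h _).trans_lt hmC)
    _ = ν A := add_tsub_cancel_of_le hr.le
  exact this.false

theorem regular_dirac [T2Space α] (x : α) : (dirac x).Regular := by
  refine have : InnerRegularCompactLTTop (dirac x) := ⟨fun A ⟨hA, _⟩ r hr => ?_⟩; inferInstance
  have hx : x ∈ A := by
    by_contra hx
    simp [dirac_apply' _ hA, hx] at hr
  refine ⟨{x}, singleton_subset_iff.2 hx, isCompact_singleton, ?_⟩
  rwa [dirac_apply_of_mem (mem_singleton x), ← dirac_apply_of_mem hx]

theorem regular_map_of_continuous [TopologicalSpace β] [MeasurableSpace β] [BorelSpace β]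
    [T2Space β] (m : Measure α) [IsFiniteMeasure m] [m.Regular] {f : α → β}
    (hf : Continuous f) : (m.map f).Regular :=
  have : (m.map f).InnerRegular := InnerRegular.map_of_continuous hf
  inferInstance

end MeasureTheory.Measure

theorem MeasureTheory.SignedMeasure.regular_posPart [T2Space α] {s : SignedMeasure α}
    (hs : s.totalVariation.Regular) : s.toJordanDecomposition.posPart.Regular :=
  have := hs
  Measure.Regular.of_le (m := s.totalVariation) (Measure.le_add_right le_rfl)

theorem MeasureTheory.SignedMeasure.regular_negPart [T2Space α] {s : SignedMeasure α}
    (hs : s.totalVariation.Regular) : s.toJordanDecomposition.negPart.Regular :=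
  have := hs
  Measure.Regular.of_le (m := s.totalVariation) (Measure.le_add_left le_rfl)

theorem IsCompensation.regular_totalVariation [T2Space α] {s ν : SignedMeasure α}
    (h : IsCompensation s ν) (hs : s.totalVariation.Regular) : ν.totalVariation.Regular :=
  have := hs
  Measure.Regular.of_le h.totalVariation_le

end Regularity

section WeakStar

variable {α : Type*} [TopologicalSpace α] [MeasurableSpace α]

theorem continuous_sInt_val (g : C(α, ℝ)) : Continuous fun μ : BMK α => sInt μ.1 g :=
  have : Continuous fun (μ : SignedMeasure α) (g : C(α, ℝ)) => sInt μ g := continuous_induced_dom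
  ((continuous_apply g).comp this).comp continuous_subtype_val

theorem WStarContinuousFamily.continuous_mk {T : Type*} [TopologicalSpace T]
    {F : T → SignedMeasure α} (hF : WStarContinuousFamily F)
    (hreg : ∀ t, (F t).totalVariation.Regular) :
    Continuous fun t => (⟨F t, hreg t⟩ : MK α) :=
  (continuous_induced_rng.2 (continuous_pi fun g => hF g)).subtype_mk _

variable [T2Space α] [BorelSpace α]

theorem MeasureTheory.SignedMeasure.ext_of_sInt_eq [LocallyCompactSpace α]
    {s t : SignedMeasure α} (hs : s.totalVariation.Regular) (ht : t.totalVariation.Regular)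
    (h : ∀ g : C(α, ℝ), sInt s g = sInt t g) : s = t := by
  have := regular_posPart hs
  have := regular_negPart hs
  have := regular_posPart ht
  have := regular_negPart ht
  have key : s.toJordanDecomposition.posPart + t.toJordanDecomposition.negPart =
      t.toJordanDecomposition.posPart + s.toJordanDecomposition.negPart := by
    refine Measure.ext_of_integral_eq_on_compactlySupported fun f => ?_
    rw [integral_add_measure f.integrable f.integrable,
      integral_add_measure f.integrable f.integrable]
    have := h f.toContinuousMap
    simp only [sInt, CompactlySupportedContinuousMap.coe_toContinuousMap] at this
    linarith
  rw [← s.toSignedMeasure_toJordanDecomposition, ← t.toSignedMeasure_toJordanDecomposition]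
  change _ - _ = _ - _
  rw [sub_eq_sub_iff_add_eq_add, ← Measure.toSignedMeasure_add, ← Measure.toSignedMeasure_add]
  simp only [key]

instance [LocallyCompactSpace α] : T2Space (BMK α) :=
  T2Space.of_injective_continuous
    (fun μ ν h => Subtype.ext (SignedMeasure.ext_of_sInt_eq μ.2.1 ν.2.1 (congrFun h)))
    (continuous_pi continuous_sInt_val)

def diracBMK (x : α) : BMK α :=
  ⟨(Measure.dirac x).toSignedMeasure, by
    rw [Measure.totalVariation_toSignedMeasure_s11]
    exact Measure.regular_dirac x, by
    simp [mNorm, Measure.totalVariation_toSignedMeasure_s11]⟩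

@[simp]
theorem sInt_diracBMK (g : α → ℝ) (x : α) : sInt (diracBMK x).1 g = g x := by
  simp [diracBMK, sInt_toSignedMeasure_s11]

theorem isClosedEmbedding_diracBMK [CompactSpace α] :
    Topology.IsClosedEmbedding (diracBMK : α → BMK α) := by
  refine Continuous.isClosedEmbedding ?_ fun x y h => ?_
  · refine continuous_induced_rng.2 (continuous_induced_rng.2 (continuous_pi fun g => ?_))
    change Continuous fun x => sInt (diracBMK x).1 g
    simpa only [sInt_diracBMK] using g.continuous
  · have := congrArg (fun μ : BMK α => μ.1.totalVariation) h
    simpa [diracBMK, Measure.totalVariation_toSignedMeasure_s11, dirac_eq_dirac_iff] using this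

theorem memW_map_diracBMK [CompactSpace α] : MemW fun μ : BMK α => μ.1.map diracBMK := by
  have hδ := (isClosedEmbedding_diracBMK (α := α)).measurableEmbedding
  refine ⟨fun g => ?_, fun μ => ⟨?_, ?_⟩⟩
  · simp only [sInt_map _ hδ]
    exact continuous_sInt_val (g.comp ⟨diracBMK, isClosedEmbedding_diracBMK.continuous⟩)
  · have := μ.2.1
    rw [SignedMeasure.totalVariation_map _ hδ]
    exact Measure.regular_map_of_continuous _ isClosedEmbedding_diracBMK.continuous
  · rw [mNorm_map _ hδ]
    exact μ.2.2

end WeakStar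

/-- If the closed unit ball `B_{M(K)}`, equipped with the weak* topology,
admits local compensation, then `K` admits a `B_{M(K)}`-compensation function. -/
theorem stmt11 (K : Type*) [TopologicalSpace K] [CompactSpace K] [T2Space K]
    [MeasurableSpace K] [BorelSpace K]
    (h : AdmitsLocalCompensation (BMK K)) :
    ∃ ξ : BMK K → MK K, IsBallCompensationFunction ξ := by
  rcases isEmpty_or_nonempty K with hK | hK
  · refine ⟨fun _ => ⟨0, by rw [SignedMeasure.totalVariation_zero]; infer_instance⟩,
      continuous_const, fun μ => ?_⟩
    simp [IsCompensation, univ_eq_empty_iff.2 hK]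
  have hδ := (isClosedEmbedding_diracBMK (α := K)).measurableEmbedding
  obtain ⟨G, hG, hGcomp⟩ := h _ memW_map_diracBMK
  obtain ⟨ρ, hρ, hρδ⟩ := hδ.exists_measurable_extend measurable_id fun _ => hK
  have hGρ (μ : BMK K) : ((G μ).map ρ).map diracBMK = G μ :=
    (hGcomp μ).map_map_of_leftInverse hδ hρ (congrFun hρδ)
  have hcomp (μ : BMK K) : IsCompensation μ.1 ((G μ).map ρ) :=
    IsCompensation.of_map hδ (by rw [hGρ]; exact hGcomp μ)
  refine ⟨fun μ => ⟨(G μ).map ρ, (hcomp μ).regular_totalVariation μ.2.1⟩,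
    WStarContinuousFamily.continuous_mk (fun g => ?_) _, hcomp⟩
  convert hG.1 ⟨fun ν => sInt ν.1 g, continuous_sInt_val g⟩ using 2 with μ
  conv_rhs => rw [← hGρ μ, sInt_map _ hδ]
  exact congrArg _ (funext fun x => (sInt_diracBMK g x).symm)

end
end

section
/- If (K,ρ) is a compact metric space, then the formula c(x,y,z) = (ρ(x,z) − ρ(x,y)) / max{ρ(x,y), ρ(x,z)} defines a closeness function for K on {(x,y,z) ∈ K³ : y ≠ z}. -/
open MeasureTheory

noncomputable section

variable {K : Type*} [TopologicalSpace K] [MeasurableSpace K]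

theorem abs_sub_div_max_le_one {a b : ℝ} (ha : 0 ≤ a) (hb : 0 ≤ b) :
    |(b - a) / max a b| ≤ 1 := by
  have hmax : 0 ≤ max a b := le_max_of_le_left ha
  rw [abs_div, abs_of_nonneg hmax]
  exact div_le_one_of_le₀
    (abs_sub_le_of_nonneg_of_le hb (le_max_right a b) ha (le_max_left a b)) hmax

theorem max_dist_pos_of_ne {α : Type*} [MetricSpace α] (x : α) {y z : α} (h : y ≠ z) :
    0 < max (dist x y) (dist x z) := by
  by_cases hxy : x = y
  · subst hxy
    exact lt_max_of_lt_right (dist_pos.2 h)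
  · exact lt_max_of_lt_left (dist_pos.2 hxy)

theorem stmt13_general (K : Type*) [MetricSpace K] :
    IsClosenessFunction K (fun p =>
      (dist p.1.1 p.1.2.2 - dist p.1.1 p.1.2.1) /
        max (dist p.1.1 p.1.2.1) (dist p.1.1 p.1.2.2)) := by
  refine ⟨?continuous, ?bounded, ?antisymm, ?normalized⟩
  case continuous =>
    exact Continuous.div (by fun_prop) (by fun_prop) fun p => (max_dist_pos_of_ne _ p.2).ne'
  case bounded =>
    exact fun _ => abs_le.1 (abs_sub_div_max_le_one dist_nonneg dist_nonneg)
  case antisymm =>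
    intro x y z _
    dsimp only
    rw [max_comm, ← neg_div, neg_sub]
  case normalized =>
    intro x z h
    dsimp only
    rw [dist_self, sub_zero, max_eq_right dist_nonneg, div_self (dist_ne_zero.2 h)]

/-- On a compact metric space, the formula
`c(x,y,z) = (ρ(x,z) - ρ(x,y)) / max{ρ(x,y), ρ(x,z)}` defines a closeness function. -/
theorem stmt13 (K : Type*) [MetricSpace K] [CompactSpace K] :
    IsClosenessFunction K (fun p =>
      (dist p.1.1 p.1.2.2 - dist p.1.1 p.1.2.1) /
        max (dist p.1.1 p.1.2.1) (dist p.1.1 p.1.2.2)) :=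
  stmt13_general K

end
end

section
/- Let K be a compact Hausdorff space admitting a closeness function. Then K is first countable. -/
open MeasureTheory

noncomputable section

variable {K : Type*} [TopologicalSpace K] [MeasurableSpace K]

/-! If `{p}` is not a Gδ, countable intersections of neighbourhoods of `p` always contain a point
other than `p`. Since `c (p, p, q) = 1`, continuity gives a neighbourhood of `p` on which
`c (a, b, q) > 0`; iterating, one gets points `Q n ≠ p` and shrinking neighbourhoods `S n` of `p`
containing all later `Q m`, with `c (a, b, Q n) > 0` on `S n`. For a limit point `r` of `Q` and a
point `s ≠ r` of `⋂ S n`, passing to the limit twice gives `c (r, s, r) ≥ 0`, whereas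
`c (r, s, r) = -c (r, r, s) = -1`. Finally, in a compact Hausdorff space a Gδ point has a countable
neighbourhood basis. -/

open Filter Topology Set

section ClosenessFunction

variable {X : Type*} [TopologicalSpace X]

theorem isCountablyGenerated_nhds_of_isGδ_singleton [CompactSpace X] [T2Space X] {p : X}
    (hp : IsGδ {p}) : (𝓝 p).IsCountablyGenerated := by
  obtain ⟨U, hUo, hU⟩ := hp.eq_iInter_nat
  have hclosed : ∀ n, ∃ C ∈ 𝓝 p, IsClosed C ∧ C ⊆ U n := fun n => by
    have hpU : p ∈ U n := mem_iInter.1 (hU ▸ mem_singleton p) n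
    obtain ⟨C, ⟨hC, hCc⟩, hCU⟩ := (closed_nhds_basis p).mem_iff.1 ((hUo n).mem_nhds hpU)
    exact ⟨C, hC, hCc, hCU⟩
  choose C hCp hCc hCU using hclosed
  let V : Finset ℕ → Set X := fun F => ⋂ n ∈ F, C n
  have hV : ∀ F, V F ∈ 𝓝 p := fun F => (biInter_finset_mem F).2 fun n _ => hCp n
  refine HasBasis.isCountablyGenerated (p := fun _ => True) (s := V) ⟨fun W => ?_⟩
  refine ⟨fun hW => ?_, fun ⟨F, _, hFW⟩ => mem_of_superset (hV F) hFW⟩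
  have hdir : Directed (· ⊇ ·) V := fun F G =>
    ⟨F ∪ G, biInter_subset_biInter_left (Finset.coe_subset.2 Finset.subset_union_left),
      biInter_subset_biInter_left (Finset.coe_subset.2 Finset.subset_union_right)⟩
  have hinter : ⋂ F, V F ⊆ {p} := fun x hx => hU ▸ mem_iInter.2 fun n =>
    hCU n (by simpa [V] using mem_iInter.1 hx {n})
  obtain ⟨F, hF⟩ := exists_subset_nhds_of_compactSpace hdir
    (fun F => isClosed_biInter fun n _ => hCc n) fun x hx => (hinter hx) ▸ hW
  exact ⟨F, trivial, hF⟩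

theorem exists_ne_forall_mem_of_not_isGδ_singleton {p : X} (hp : ¬IsGδ {p}) (U : ℕ → Set X)
    (hU : ∀ n, U n ∈ 𝓝 p) : ∃ q ≠ p, ∀ n, q ∈ U n := by
  by_contra! h
  refine hp (((⋂ n, interior (U n)).eq_singleton_iff_unique_mem.2 ⟨?_, ?_⟩) ▸
    .iInter_of_isOpen fun n => isOpen_interior)
  · exact mem_iInter.2 fun n => mem_interior_iff_mem_nhds.2 (hU n)
  · exact fun q hq => by_contra fun hqp => (h q hqp).elim fun n hn =>
      hn (interior_subset (mem_iInter.1 hq n))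

variable {c : {x : X × X × X // x.2.1 ≠ x.2.2} → ℝ}

theorem IsClosenessFunction.exists_mem_nhds_pos (hc : IsClosenessFunction X c) {p q : X}
    (hpq : p ≠ q) : ∃ U ∈ 𝓝 p, ∀ a ∈ U, ∀ b ∈ U, ∀ h : b ≠ q, 0 < c ⟨(a, b, q), h⟩ := by
  have hpos : c ⁻¹' Ioi 0 ∈ 𝓝 ⟨(p, p, q), hpq⟩ :=
    hc.1.continuousAt.preimage_mem_nhds (Ioi_mem_nhds (by rw [hc.2.2.2 p q hpq]; exact one_pos))
  rw [nhds_subtype_eq_comap] at hpos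
  obtain ⟨N, hN, hNc⟩ := mem_comap.1 hpos
  have hpp : (fun ab : X × X => (ab.1, ab.2, q)) ⁻¹' N ∈ 𝓝 (p, p) :=
    (by fun_prop : Continuous fun ab : X × X => (ab.1, ab.2, q)).continuousAt.preimage_mem_nhds hN
  rw [nhds_prod_eq, mem_prod_self_iff] at hpp
  obtain ⟨U, hU, hUN⟩ := hpp
  exact ⟨U, hU, fun a ha b hb h => hNc (show (a, b, q) ∈ N from hUN (mk_mem_prod ha hb))⟩

theorem IsClosenessFunction.false_of_pos_along_seq [CompactSpace X]
    (hc : IsClosenessFunction X c)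
    (Q : ℕ → X) (S : ℕ → Set X) (hQS : ∀ m n, m < n → Q n ∈ S m)
    (hS : ∀ n, ∀ a ∈ S n, ∀ b ∈ S n, ∀ h : b ≠ Q n, 0 < c ⟨(a, b, Q n), h⟩)
    (hsep : ∀ r, ∃ s ≠ r, ∀ n, s ∈ S n ∧ s ≠ Q n) : False := by
  obtain ⟨hcont, -, hanti, hone⟩ := hc
  set 𝒰 := hyperfilter ℕ
  set r := (𝒰.map Q).lim
  have hQr : Tendsto Q 𝒰 (𝓝 r) := Ultrafilter.le_nhds_lim _
  obtain ⟨s, hsr, hs⟩ := hsep r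
  have hlim : ∀ m, 0 ≤ c ⟨(r, s, Q m), (hs m).2⟩ := fun m => by
    refine ge_of_tendsto (hcont.continuousAt.tendsto.comp (tendsto_subtype_rng
      (f := fun n => ⟨(Q n, s, Q m), (hs m).2⟩) |>.2 <| hQr.prodMk_nhds tendsto_const_nhds)) ?_
    filter_upwards [Nat.hyperfilter_le_atTop (eventually_gt_atTop m)] with n hn
    exact (hS m (Q n) (hQS m n hn) s (hs m).1 (hs m).2).le
  have hr : 0 ≤ c ⟨(r, s, r), hsr⟩ :=
    ge_of_tendsto (hcont.continuousAt.tendsto.comp (tendsto_subtype_rng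
      (f := fun m => ⟨(r, s, Q m), (hs m).2⟩) |>.2 <|
        tendsto_const_nhds.prodMk_nhds (tendsto_const_nhds.prodMk_nhds hQr)))
      (Eventually.of_forall hlim)
  rw [hanti, hone r s hsr.symm] at hr
  linarith

theorem IsClosenessFunction.isGδ_singleton [CompactSpace X] [T1Space X]
    (hc : IsClosenessFunction X c) (p : X) : IsGδ {p} := by
  by_contra hp
  have hstep : ∀ W ∈ 𝓝 p, ∃ q ≠ p, ∃ U ∈ 𝓝 p, q ∈ W ∧ U ⊆ W ∧
      ∀ a ∈ U, ∀ b ∈ U, ∀ h : b ≠ q, 0 < c ⟨(a, b, q), h⟩ := fun W hW => by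
    obtain ⟨q, hqp, hqW⟩ := exists_ne_forall_mem_of_not_isGδ_singleton hp (fun _ => W)
      fun _ => hW
    obtain ⟨U, hU, hUc⟩ := hc.exists_mem_nhds_pos hqp.symm
    exact ⟨q, hqp, U ∩ W, inter_mem hU hW, hqW 0, inter_subset_right,
      fun a ha b hb => hUc a ha.1 b hb.1⟩
  have : Nonempty X := ⟨p⟩
  choose! q hqp next hnext hqW hnextW hpos using hstep
  let W : ℕ → Set X := fun n => next^[n] univ
  have hW : ∀ n, W n ∈ 𝓝 p := fun n => by
    induction n with
    | zero => exact univ_mem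
    | succ n ih => simpa only [W, Function.iterate_succ_apply'] using hnext _ ih
  have hWsucc : ∀ n, W (n + 1) = next (W n) := fun n => Function.iterate_succ_apply' _ _ _
  have hWanti : Antitone W := antitone_nat_of_succ_le fun n => hWsucc n ▸ hnextW _ (hW n)
  obtain ⟨q₀, hq₀p, hq₀⟩ := exists_ne_forall_mem_of_not_isGδ_singleton hp
    (fun n => W (n + 1) \ {q (W n)}) fun n =>
    sdiff_mem (hW (n + 1)) (compl_singleton_mem_nhds (hqp _ (hW n)).symm)
  refine hc.false_of_pos_along_seq (fun n => q (W n)) (fun n => W (n + 1))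
    (fun m n hmn => hWanti hmn (hqW _ (hW n)))
    (fun n => hWsucc n ▸ hpos _ (hW n)) fun r => ?_
  -- `⋂ n, W (n + 1)` contains both `p` and `q₀ ≠ p`, so one of them differs from `r`.
  by_cases hpr : p = r
  · exact ⟨q₀, hpr ▸ hq₀p, hq₀⟩
  · exact ⟨p, hpr, fun n => ⟨mem_of_mem_nhds (hW (n + 1)), (hqp _ (hW n)).symm⟩⟩

end ClosenessFunction

/-- A compact Hausdorff space admitting a closeness function is first
countable. -/
theorem stmt14 (K : Type*) [TopologicalSpace K] [CompactSpace K] [T2Space K]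
    (h : ∃ c : {p : K × K × K // p.2.1 ≠ p.2.2} → ℝ, IsClosenessFunction K c) :
    FirstCountableTopology K := by
  obtain ⟨c, hc⟩ := h
  exact ⟨fun p => isCountablyGenerated_nhds_of_isGδ_singleton (hc.isGδ_singleton p)⟩

end
end

section
/- Let K be a compact Hausdorff space admitting a closeness function. If K is separable, then K is metrizable. -/
open MeasureTheory

noncomputable section

variable {K : Type*} [TopologicalSpace K] [MeasurableSpace K]

lemma closeness_nbhd {K : Type*} [TopologicalSpace K]
    (c : {p : K × K × K // p.2.1 ≠ p.2.2} → ℝ) (hc : Continuous c)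
    (x0 y0 z0 : K) (h : y0 ≠ z0) (S : Set ℝ) (hS : IsOpen S)
    (hmem : c ⟨(x0, y0, z0), h⟩ ∈ S) :
    ∃ A ∈ nhds x0, ∃ B ∈ nhds y0, ∃ C ∈ nhds z0,
      ∀ x ∈ A, ∀ y ∈ B, ∀ z ∈ C, ∀ (hyz : y ≠ z), c ⟨(x, y, z), hyz⟩ ∈ S := by
  have hopen : IsOpen (c ⁻¹' S) := hS.preimage hc
  rw [isOpen_induced_iff] at hopen
  obtain ⟨U, hU, hUeq⟩ := hopen
  have hpt : ((x0, y0, z0) : K × K × K) ∈ U := by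
    have : (⟨(x0, y0, z0), h⟩ : {p : K × K × K // p.2.1 ≠ p.2.2}) ∈ c ⁻¹' S := hmem
    rw [← hUeq] at this
    exact this
  have hnu : U ∈ nhds ((x0, y0, z0) : K × K × K) := hU.mem_nhds hpt
  rw [mem_nhds_prod_iff] at hnu
  obtain ⟨A, hA, W, hW, hAW⟩ := hnu
  rw [mem_nhds_prod_iff] at hW
  obtain ⟨B, hB, C, hC, hBC⟩ := hW
  refine ⟨A, hA, B, hB, C, hC, fun x hx y hy z hz hyz => ?_⟩
  have : ((x, y, z) : K × K × K) ∈ U := hAW ⟨hx, hBC ⟨hy, hz⟩⟩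
  have : (⟨(x, y, z), hyz⟩ : {p : K × K × K // p.2.1 ≠ p.2.2}) ∈ Subtype.val ⁻¹' U := this
  rw [hUeq] at this
  exact this

/-- A separable compact Hausdorff space admitting a closeness function is
metrizable. -/
theorem stmt15 (K : Type*) [TopologicalSpace K] [CompactSpace K] [T2Space K]
    [TopologicalSpace.SeparableSpace K]
    (h : ∃ c : {p : K × K × K // p.2.1 ≠ p.2.2} → ℝ, IsClosenessFunction K c) :
    TopologicalSpace.MetrizableSpace K := by
  classical
  obtain ⟨c, hc_cont, _, hanti, hdiag⟩ := h
  obtain ⟨s, hs_count, hs_dense⟩ := TopologicalSpace.exists_countable_dense K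
  haveI : Countable s := hs_count.to_subtype
  -- the separating map into a countable product of reals
  set f : K → (s × s → ℝ) := fun x p =>
    if hp : (p.1 : K) ≠ (p.2 : K) then c ⟨(x, p.1, p.2), hp⟩ else 0 with hf
  have hf_cont : Continuous f := by
    refine continuous_pi fun p => ?_
    by_cases hp : (p.1 : K) ≠ (p.2 : K)
    · simp only [hf, dif_pos hp]
      exact hc_cont.comp
        (Continuous.subtype_mk (continuous_id.prodMk continuous_const) _)
    · simp only [hf, dif_neg hp]
      exact continuous_const
  have hf_inj : Function.Injective f := by
    intro y z hfyz
    by_contra hyz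
    -- c(y,y,z) = 1 and c(z,y,z) = -1
    have h1 : c ⟨(y, y, z), hyz⟩ = 1 := hdiag y z hyz
    have h2 : c ⟨(z, y, z), hyz⟩ = -1 := by
      rw [hanti z y z hyz, hdiag z y (Ne.symm hyz)]
    obtain ⟨A, hA, B, hB, C, hC, hABC⟩ :=
      closeness_nbhd c hc_cont y y z hyz (Set.Ioi (1/2 : ℝ)) isOpen_Ioi
        (by rw [h1]; norm_num)
    obtain ⟨A', hA', B', hB', C', hC', hABC'⟩ :=
      closeness_nbhd c hc_cont z y z hyz (Set.Iio (-(1/2) : ℝ)) isOpen_Iio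
        (by rw [h2]; norm_num)
    obtain ⟨u, v, hu, hv, hyu, hzv, huv⟩ := t2_separation hyz
    -- pick dense points
    have hNy : A ∩ B ∩ B' ∩ u ∈ nhds y :=
      Filter.inter_mem (Filter.inter_mem (Filter.inter_mem hA hB) hB') (hu.mem_nhds hyu)
    have hNz : C ∩ A' ∩ C' ∩ v ∈ nhds z :=
      Filter.inter_mem (Filter.inter_mem (Filter.inter_mem hC hA') hC') (hv.mem_nhds hzv)
    obtain ⟨d, hd⟩ := mem_closure_iff_nhds.mp (hs_dense y) _ hNy
    obtain ⟨d', hd'⟩ := mem_closure_iff_nhds.mp (hs_dense z) _ hNz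
    obtain ⟨⟨⟨hdA, hdB⟩, hdB'⟩, hdu⟩ := hd.1
    obtain ⟨⟨⟨hd'C, hd'A'⟩, hd'C'⟩, hd'v⟩ := hd'.1
    have hdd' : d ≠ d' := fun he => huv.ne_of_mem hdu hd'v he
    have hy_val : c ⟨(y, d, d'), hdd'⟩ ∈ Set.Ioi (1/2 : ℝ) :=
      hABC y (mem_of_mem_nhds hA) d hdB d' hd'C hdd'
    have hz_val : c ⟨(z, d, d'), hdd'⟩ ∈ Set.Iio (-(1/2) : ℝ) :=
      hABC' z (mem_of_mem_nhds hA') d hdB' d' hd'C' hdd'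
    have := congrFun hfyz (⟨d, hd.2⟩, ⟨d', hd'.2⟩)
    simp only [hf, dif_pos hdd'] at this
    rw [this] at hy_val
    have h3 : (1/2 : ℝ) < c ⟨(z, d, d'), hdd'⟩ := hy_val
    have h4 : c ⟨(z, d, d'), hdd'⟩ < -(1/2) := hz_val
    linarith
  have hemb := (hf_cont.isClosedEmbedding hf_inj).toIsEmbedding
  exact hemb.metrizableSpace

end
end

section
/- Let Γ be an uncountable set and let A(Γ) = Γ ∪ {∞} be the one-point compactification of Γ equipped with the discrete topology. Then A(Γ) does not admit a closeness function; in particular, it does not admit a B_{M(A(Γ))}-compensation function. -/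
open MeasureTheory

noncomputable section

variable {K : Type*} [TopologicalSpace K] [MeasurableSpace K]

instance (Γ : Type*) [TopologicalSpace Γ] : MeasurableSpace (OnePoint Γ) :=
  borel (OnePoint Γ)

instance (Γ : Type*) [TopologicalSpace Γ] : BorelSpace (OnePoint Γ) := ⟨rfl⟩

/-!
Both parts rest on one combinatorial fact: if for every `z ∈ Γ` a property `P z w` holds for all
`w` outside a finite subset of `Γ` (as continuity at `∞` provides), then, `Γ` being uncountable,
some `y ≠ z` satisfy both `P z y` and `P y z`. For a closeness function `c`, `c(∞, ∞, z) = 1`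
gives `c(∞, y, z) > 0` for `y` near `∞`, which clashes with `c(∞, y, z) = -c(∞, z, y)`. For a compensation function `ξ`, test it on
`μ_{a,w} = (δ_a + δ_w - δ_∞) / 3`: at `w = ∞` this is `δ_a / 3`, whose only compensation puts mass
`1/3` on `a`, so `ξ(μ_{a,w})({a}) > 1/4` for `w` near `∞`. Since `μ_{a,b} = μ_{b,a}`, the positive
measure `ξ(μ_{a,b})` of total mass `1/3` would give mass `> 1/4` to both `a` and `b`.
-/

open Filter Topology OnePoint
open scoped NNReal

theorem exists_ne_of_forall_eventually_cofinite {Γ : Type*} [Uncountable Γ] {P : Γ → Γ → Prop}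
    (hP : ∀ z, ∀ᶠ y in cofinite, P z y) : ∃ y z, y ≠ z ∧ P z y ∧ P y z := by
  -- `z` avoids a countably infinite set `range f` and all exceptional sets along it; then some
  -- point of `range f` outside the finite exceptional set of `z` pairs with `z`.
  let f := Infinite.natEmbedding Γ
  have hcount : (Set.range f ∪ ⋃ n, {y | ¬P (f n) y}).Countable :=
    (Set.countable_range f).union (Set.countable_iUnion fun n => (hP (f n)).countable)
  obtain ⟨z, hz⟩ : ∃ z, z ∉ Set.range f ∪ ⋃ n, {y | ¬P (f n) y} := by
    by_contra! h
    exact Set.not_countable_univ (hcount.mono fun z _ => h z)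
  simp only [Set.mem_union, Set.mem_iUnion, Set.mem_ofPred_eq, not_or, not_exists,
    not_not] at hz
  obtain ⟨_, ⟨n, rfl⟩, hn⟩ := ((Set.infinite_range_of_injective f.injective).sdiff (hP z)).nonempty
  exact ⟨f n, z, fun h => hz.1 ⟨n, h⟩, not_not.mp hn, hz.2 n⟩

theorem OnePoint.exists_ne_of_forall_eventually_nhds_infty {Γ : Type*} [TopologicalSpace Γ]
    [DiscreteTopology Γ] [Uncountable Γ] {P : Γ → OnePoint Γ → Prop}
    (hP : ∀ z, ∀ᶠ w in 𝓝 ∞, P z w) : ∃ y z : Γ, y ≠ z ∧ P z y ∧ P y z :=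
  exists_ne_of_forall_eventually_cofinite fun z => by
    simpa [comap_coe_nhds_infty, coclosedCompact_eq_cocompact, cocompact_eq_cofinite]
      using (hP z).comap ((↑) : Γ → OnePoint Γ)

theorem IsClosenessFunction.eventually_pos {K : Type*} [TopologicalSpace K] [T2Space K]
    {c : {p : K × K × K // p.2.1 ≠ p.2.2} → ℝ} (hc : IsClosenessFunction K c) {x z : K}
    (hxz : x ≠ z) : ∀ᶠ y in 𝓝 x, ∀ h : y ≠ z, 0 < c ⟨(x, y, z), h⟩ := by
  have hopen : IsOpen {p : K × K × K | p.2.1 ≠ p.2.2} :=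
    isOpen_ne_fun continuous_snd.fst continuous_snd.snd
  have hpos : ∀ᶠ q in 𝓝 (⟨(x, x, z), hxz⟩ : {p : K × K × K // p.2.1 ≠ p.2.2}), 0 < c q :=
    (hc.1.tendsto _).eventually_const_lt (by rw [hc.2.2.2 x z hxz]; exact one_pos)
  have hpos' : ∀ᶠ p in 𝓝 (x, x, z), ∀ h : p.2.1 ≠ p.2.2, 0 < c ⟨p, h⟩ :=
    hopen.isOpenEmbedding_subtypeVal.map_nhds_eq
      (⟨(x, x, z), hxz⟩ : {p : K × K × K | p.2.1 ≠ p.2.2}) ▸ hpos.mono fun q hq _ => hq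
  exact (continuous_const.prodMk (continuous_id.prodMk continuous_const)).tendsto x
    |>.eventually hpos'

theorem OnePoint.not_exists_isClosenessFunction {Γ : Type*} [TopologicalSpace Γ]
    [DiscreteTopology Γ] [Uncountable Γ] :
    ¬ ∃ c, IsClosenessFunction (OnePoint Γ) c := by
  rintro ⟨c, hc⟩
  obtain ⟨y, z, hyz, hy, hz⟩ :=
    exists_ne_of_forall_eventually_nhds_infty fun z : Γ => hc.eventually_pos (infty_ne_coe z)
  have hne : (y : OnePoint Γ) ≠ z := coe_injective.ne hyz
  linarith [hy hne, hz hne.symm, hc.2.2.1 ∞ y z hne]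

section SignedMeasure

variable {K : Type*} [MeasurableSpace K]

theorem MeasureTheory.Measure.regular_of_measure_compl_finite_eq_zero [TopologicalSpace K]
    [OpensMeasurableSpace K] [T1Space K] (μ : Measure K) [IsFiniteMeasure μ] {S : Set K}
    (hS : S.Finite) (h0 : μ Sᶜ = 0) : μ.Regular where
  lt_top_of_isCompact _ _ := measure_lt_top μ _
  outerRegular A _ r hr := by
    refine ⟨(S \ A)ᶜ, fun x hx h => h.2 hx, hS.sdiff.isClosed.isOpen_compl, lt_of_le_of_lt ?_ hr⟩
    calc μ (S \ A)ᶜ ≤ μ (A ∪ Sᶜ) := measure_mono fun x hx => by by_cases x ∈ S <;> simp_all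
      _ ≤ μ A + μ Sᶜ := measure_union_le _ _
      _ = μ A := by rw [h0, add_zero]
  innerRegular U _ r hr :=
    ⟨U ∩ S, Set.inter_subset_left, (hS.inter_of_right U).isCompact,
      by rwa [measure_inter_conull h0]⟩

theorem MeasureTheory.SignedMeasure.toJordanDecomposition_sub_of_mutuallySingular {P N : Measure K}
    [IsFiniteMeasure P] [IsFiniteMeasure N] (h : P ⟂ₘ N) :
    (P.toSignedMeasure - N.toSignedMeasure).toJordanDecomposition = ⟨P, N, h⟩ :=
  SignedMeasure.toJordanDecomposition_eq rfl

theorem MeasureTheory.SignedMeasure.totalVariation_sub_of_mutuallySingular {P N : Measure K}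
    [IsFiniteMeasure P] [IsFiniteMeasure N] (h : P ⟂ₘ N) :
    (P.toSignedMeasure - N.toSignedMeasure).totalVariation = P + N := by
  rw [SignedMeasure.totalVariation, SignedMeasure.toJordanDecomposition_sub_of_mutuallySingular h]

theorem sInt_sub_of_mutuallySingular {P N : Measure K} [IsFiniteMeasure P] [IsFiniteMeasure N]
    (h : P ⟂ₘ N) (f : K → ℝ) :
    sInt (P.toSignedMeasure - N.toSignedMeasure) f = ∫ x, f x ∂P - ∫ x, f x ∂N := by
  rw [sInt, SignedMeasure.toJordanDecomposition_sub_of_mutuallySingular h]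

theorem sInt_indicator_one (ν : SignedMeasure K) {A : Set K} (hA : MeasurableSet A) :
    sInt ν (A.indicator 1) = ν A := by
  conv_rhs => rw [← SignedMeasure.toSignedMeasure_toJordanDecomposition ν]
  rw [sInt, integral_indicator_one hA, integral_indicator_one hA,
    JordanDecomposition.toSignedMeasure, sub_apply, Measure.toSignedMeasure_apply_measurable hA,
    Measure.toSignedMeasure_apply_measurable hA]

theorem MeasureTheory.SignedMeasure.apply_add_apply_le_univ {ν : SignedMeasure K} (hν : 0 ≤ ν)
    {A B : Set K} (hA : MeasurableSet A) (hB : MeasurableSet B) (hAB : Disjoint A B) :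
    ν A + ν B ≤ ν Set.univ := by
  have hsplit : ν Set.univ = ν (A ∪ B) + ν (A ∪ B)ᶜ := by
    rw [← VectorMeasure.of_union disjoint_compl_right (hA.union hB) (hA.union hB).compl,
      Set.union_compl_self]
  rw [hsplit, VectorMeasure.of_union hAB hA hB]
  linarith [show 0 ≤ ν (A ∪ B)ᶜ from hν _ (hA.union hB).compl]

theorem MeasureTheory.SignedMeasure.apply_eq_univ_of_le {ν : SignedMeasure K} {P : Measure K}
    [IsFiniteMeasure P] (hν : 0 ≤ ν) (hle : ν ≤ P.toSignedMeasure) {A : Set K}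
    (hA : MeasurableSet A) (hP : P Aᶜ = 0) : ν A = ν Set.univ := by
  have hcompl : ν Aᶜ = 0 := by
    refine le_antisymm ?_ (hν Aᶜ hA.compl)
    simpa [Measure.toSignedMeasure_apply_measurable hA.compl, Measure.real, hP]
      using hle Aᶜ hA.compl
  rw [← Set.union_compl_self A, VectorMeasure.of_union disjoint_compl_right hA hA.compl, hcompl,
    add_zero]

theorem IsCompensation.of_univ_pos {μ ν : SignedMeasure K} (h : IsCompensation μ ν)
    (hμ : 0 < μ Set.univ) :
    0 ≤ ν ∧ ν ≤ μ.toJordanDecomposition.posPart.toSignedMeasure ∧ ν Set.univ = μ Set.univ := by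
  rwa [IsCompensation, if_pos hμ] at h

end SignedMeasure

theorem MK.continuous_sInt {K : Type*} [TopologicalSpace K] [MeasurableSpace K] (g : C(K, ℝ)) :
    Continuous fun ν : MK K => sInt ν.1 g := by
  have hweak : Continuous fun μ : SignedMeasure K => fun g' : C(K, ℝ) => sInt μ g' :=
    continuous_induced_dom
  exact ((continuous_apply g).comp hweak).comp continuous_subtype_val

namespace OnePoint

variable {Γ : Type*} [TopologicalSpace Γ]

def thirdDirac (x : OnePoint Γ) : Measure (OnePoint Γ) := (3⁻¹ : ℝ≥0) • Measure.dirac x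

instance (x : OnePoint Γ) : IsFiniteMeasure (thirdDirac x) := by
  unfold thirdDirac; infer_instance

theorem thirdDirac_apply_of_notMem [T1Space Γ] {x : OnePoint Γ} {s : Set (OnePoint Γ)}
    (h : x ∉ s) : thirdDirac x s = 0 := by
  simp [thirdDirac, Measure.dirac_apply, h]

theorem thirdDirac_real_univ (x : OnePoint Γ) : (thirdDirac x).real Set.univ = 3⁻¹ := by
  simp [thirdDirac, Measure.real]

theorem integral_thirdDirac [T1Space Γ] (g : C(OnePoint Γ, ℝ)) (x : OnePoint Γ) :
    ∫ y, g y ∂thirdDirac x = 3⁻¹ * g x := by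
  simp [thirdDirac, integral_smul_nnreal_measure, NNReal.smul_def]

def testMeasure (a w : OnePoint Γ) : SignedMeasure (OnePoint Γ) :=
  (thirdDirac a).toSignedMeasure + (thirdDirac w).toSignedMeasure - (thirdDirac ∞).toSignedMeasure

theorem testMeasure_comm (a b : OnePoint Γ) : testMeasure a b = testMeasure b a := by
  rw [testMeasure, testMeasure, add_comm (thirdDirac a).toSignedMeasure]

theorem testMeasure_univ (a w : OnePoint Γ) : testMeasure a w Set.univ = 3⁻¹ := by
  simp only [testMeasure, sub_apply, add_apply,
    Measure.toSignedMeasure_apply_measurable MeasurableSet.univ, thirdDirac_real_univ]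
  norm_num

theorem testMeasure_infty (a : OnePoint Γ) :
    testMeasure a ∞ =
      (thirdDirac a).toSignedMeasure - (0 : Measure (OnePoint Γ)).toSignedMeasure := by
  rw [testMeasure, add_sub_cancel_right, Measure.toSignedMeasure_zero, sub_zero]

theorem testMeasure_coe (a b : Γ) :
    testMeasure a b = (thirdDirac (a : OnePoint Γ) + thirdDirac (b : OnePoint Γ)).toSignedMeasure -
      (thirdDirac ∞).toSignedMeasure := by
  rw [testMeasure, Measure.toSignedMeasure_add]

theorem mutuallySingular_thirdDirac [T1Space Γ] (a b : Γ) :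
    thirdDirac (a : OnePoint Γ) + thirdDirac (b : OnePoint Γ) ⟂ₘ thirdDirac ∞ :=
  ⟨{∞}, measurableSet_singleton _, by simp [thirdDirac_apply_of_notMem],
    thirdDirac_apply_of_notMem (by simp)⟩

theorem sInt_testMeasure [T1Space Γ] (a : Γ) (w : OnePoint Γ) (g : C(OnePoint Γ, ℝ)) :
    sInt (testMeasure a w) g = 3⁻¹ * (g a + g w - g ∞) := by
  induction w using OnePoint.rec with
  | infty =>
    rw [testMeasure_infty, sInt_sub_of_mutuallySingular (Measure.MutuallySingular.zero_right),
      integral_thirdDirac, integral_zero_measure]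
    ring
  | coe b =>
    rw [testMeasure_coe, sInt_sub_of_mutuallySingular (mutuallySingular_thirdDirac a b),
      integral_add_measure, integral_thirdDirac, integral_thirdDirac, integral_thirdDirac]
    · ring
    all_goals exact g.continuous.integrable_of_hasCompactSupport (.of_compactSpace _)

theorem testMeasure_mem_ball [T1Space Γ] (a : Γ) (w : OnePoint Γ) :
    (testMeasure a w).totalVariation.Regular ∧ mNorm (testMeasure a w) ≤ 1 := by
  induction w using OnePoint.rec with
  | infty =>
    rw [mNorm, testMeasure_infty,
      SignedMeasure.totalVariation_sub_of_mutuallySingular .zero_right, add_zero]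
    refine ⟨Measure.regular_of_measure_compl_finite_eq_zero _
      (Set.finite_singleton (a : OnePoint Γ)) (thirdDirac_apply_of_notMem (by simp)), ?_⟩
    rw [← Measure.real, thirdDirac_real_univ]
    norm_num
  | coe b =>
    rw [mNorm, testMeasure_coe, SignedMeasure.totalVariation_sub_of_mutuallySingular
      (mutuallySingular_thirdDirac a b)]
    refine ⟨Measure.regular_of_measure_compl_finite_eq_zero _
      (S := {(a : OnePoint Γ), (b : OnePoint Γ), ∞}) (Set.toFinite _)
      (by simp [thirdDirac_apply_of_notMem]), ?_⟩
    rw [← Measure.real, measureReal_add_apply, measureReal_add_apply, thirdDirac_real_univ,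
      thirdDirac_real_univ, thirdDirac_real_univ]
    norm_num

def testBall [T1Space Γ] (a : Γ) (w : OnePoint Γ) : BMK (OnePoint Γ) :=
  ⟨testMeasure a w, testMeasure_mem_ball a w⟩

theorem continuous_testBall [T1Space Γ] (a : Γ) : Continuous (testBall a) := by
  refine Continuous.subtype_mk (continuous_induced_rng.mpr (continuous_pi fun g => ?_)) _
  simp_rw [Function.comp_apply, sInt_testMeasure]
  fun_prop

theorem _root_.IsCompensation.testMeasure_infty_apply [T1Space Γ] {a : Γ}
    {ν : SignedMeasure (OnePoint Γ)} (h : IsCompensation (testMeasure a ∞) ν) :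
    ν {(a : OnePoint Γ)} = 3⁻¹ := by
  obtain ⟨hν, hle, huniv⟩ := h.of_univ_pos (by rw [testMeasure_univ]; norm_num)
  rw [testMeasure_infty, SignedMeasure.toJordanDecomposition_sub_of_mutuallySingular
    Measure.MutuallySingular.zero_right] at hle
  rw [SignedMeasure.apply_eq_univ_of_le hν hle (measurableSet_singleton _)
    (thirdDirac_apply_of_notMem (by simp)), huniv, testMeasure_univ]

theorem _root_.IsCompensation.testMeasure_apply_add_apply_le [T1Space Γ] {a b : Γ} (hab : a ≠ b)
    {ν : SignedMeasure (OnePoint Γ)} (h : IsCompensation (testMeasure a b) ν) :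
    ν {(a : OnePoint Γ)} + ν {(b : OnePoint Γ)} ≤ 3⁻¹ := by
  obtain ⟨hν, -, huniv⟩ := h.of_univ_pos (by rw [testMeasure_univ]; norm_num)
  rw [← testMeasure_univ (a : OnePoint Γ) b, ← huniv]
  exact SignedMeasure.apply_add_apply_le_univ hν (measurableSet_singleton _)
    (measurableSet_singleton _) (by simpa using hab)

def singletonIndicator [DiscreteTopology Γ] (a : Γ) : C(OnePoint Γ, ℝ) :=
  ⟨({(a : OnePoint Γ)} : Set (OnePoint Γ)).indicator 1,
    IsClopen.continuous_indicator ⟨isClosed_singleton, by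
      simpa using isOpenMap_coe {a} (isOpen_discrete _)⟩ continuous_const⟩

theorem not_exists_isBallCompensationFunction [DiscreteTopology Γ] [Uncountable Γ] :
    ¬ ∃ ξ : BMK (OnePoint Γ) → MK (OnePoint Γ), IsBallCompensationFunction ξ := by
  rintro ⟨ξ, hξ, hcomp⟩
  let ν (a : Γ) (w : OnePoint Γ) : SignedMeasure (OnePoint Γ) := (ξ (testBall a w)).1
  have hev (a : Γ) : ∀ᶠ w in 𝓝 ∞, 1 / 4 < ν a w {(a : OnePoint Γ)} := by
    have hcont : Continuous fun w => ν a w {(a : OnePoint Γ)} := by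
      simp_rw [← sInt_indicator_one _ (measurableSet_singleton _)]
      exact (MK.continuous_sInt (singletonIndicator a)).comp (hξ.comp (continuous_testBall a))
    refine hcont.continuousAt.eventually (lt_mem_nhds ?_)
    show 1 / 4 < (ξ (testBall a ∞)).1 {(a : OnePoint Γ)}
    rw [(hcomp (testBall a ∞)).testMeasure_infty_apply]
    norm_num
  obtain ⟨a, b, hab, hb, ha⟩ := exists_ne_of_forall_eventually_nhds_infty hev
  have hsymm : ν b a = ν a b := by simp only [ν, testBall, testMeasure_comm]
  linarith [hsymm ▸ hb, ha, (hcomp (testBall a b)).testMeasure_apply_add_apply_le hab]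

end OnePoint

/-- If `Γ` is uncountable, then the one-point compactification `A(Γ)` of the
discrete space `Γ` admits no closeness function; in particular it admits no
`B_{M(A(Γ))}`-compensation function. -/
theorem stmt17 (Γ : Type*) [TopologicalSpace Γ] [DiscreteTopology Γ]
    (hΓ : ¬ Countable Γ) :
    (¬ ∃ c : {p : OnePoint Γ × OnePoint Γ × OnePoint Γ // p.2.1 ≠ p.2.2} → ℝ,
        IsClosenessFunction (OnePoint Γ) c) ∧
      ¬ ∃ ξ : BMK (OnePoint Γ) → MK (OnePoint Γ), IsBallCompensationFunction ξ := by
  have : Uncountable Γ := not_countable_iff.mp hΓ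
  exact ⟨OnePoint.not_exists_isClosenessFunction, OnePoint.not_exists_isBallCompensationFunction⟩
end
end
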